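/- arXiv:1307.4450 — 4 statements merged into one kernel-verified Lean document; each statement's English description precedes it below -/
import Mathlib

section
/- Let 0 < λ < ∞ and μ > 0. Let (η_i)_{i≥0} be i.i.d. ℕ-valued integrable random variables with mean μ, and let (Y_i)_{i≥0} be i.i.d. Bernoulli(λ/(1+λ)) random variables, independent of (η_i). Let N be the reflected (Lindley) recursion driven by ξ_i = η_i − Y_i. Then: (i) if μ < λ/(1+λ), the sequence (N_L)_{L≥0} converges in distribution to an almost surely finite random variable, in particular it is tight; (ii) if μ = λ/(1+λ), then N_L → ∞ in probability as L → ∞; (iii) if μ > λ/(1+λ), then P[N_L ≥ (μ − λ/(1+λ))L/2] → 1 as L → ∞. (This is the probabilistic content of the theorem that the one-dimensional totally asymmetric activated random walk has critical density μ_c = λ/(1+λ) and does not fixate at criticality.) -/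
/-!
Write `M n = max_{m ≤ n} (ξ_0 + ⋯ + ξ_{m-1})` for the running maximum of the random walk with
i.i.d. increments `ξ_i = η_i - Y_i`, of mean `c = μ - λ/(1+λ)`. Unrolling the Lindley recursion
gives `N_L = max_{m ≤ L+1}` of the partial sums of the reversed increments
`ξ_L, ξ_{L-1}, …, ξ_0`, so `N_L` has the law of `M (L+1)`.

By the strong law of large numbers the partial sums grow like `c n`. If `c < 0` they are
eventually negative, so `M n` is eventually constant: it converges a.s. to a finite limit, which
gives convergence in distribution and tightness of `N_L`. If `c > 0`, `N_L` is at least the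
`(L+1)`-st partial sum, which exceeds `c L / 2` eventually.

In the critical case `c = 0` the walk is integer valued and skip-free downwards (`ξ ≥ -1`).
Splitting off the first step, `M (n+1) = max 0 (ξ_0 + M' n)` with `M' n` an independent copy of
`M n`, and the maximum differs from `ξ_0 + M' n` only on `{ξ_0 = -1, M' n = 0}`. Hence for
`t ≤ 0` the moment generating functions satisfy
`φ_{n+1}(t) = f(t) φ_n(t) + (1 - e^{-t}) P(ξ_0 = -1) P(M n = 0)` with `f` the mgf of `ξ_0`.
Letting `n → ∞`, `(e^{-t} - 1) P(ξ_0 = -1) b = φ_∞(t) (f(t) - 1) = o(t)` as `t → 0⁻`, because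
`f'(0) = E ξ_0 = 0`; so `b = lim P(M n = 0) = 0`. At `t = -1`, where `f(-1) > 1`, the same
identity forces `φ_∞(-1) = 0`, and a Chernoff bound turns `E e^{-M n} → 0` into
`P(M n ≤ K) → 0`.
-/

open MeasureTheory ProbabilityTheory Filter Topology Finset Real

lemma Real.abs_exp_sub_one_le_of_le_one {a : ℝ} (ha : a ≤ 1) : |exp a - 1| ≤ 2 * |a| := by
  rcases le_or_gt (-1) a with h | h
  · exact abs_exp_sub_one_le (abs_le.2 ⟨h, ha⟩)
  · rw [abs_of_nonpos (by linarith [exp_le_one_iff.2 (by linarith : a ≤ 0)]),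
      abs_of_neg (by linarith)]
    linarith [exp_pos a]

namespace MeasureTheory

variable {α : Type*} [MeasurableSpace α] {μ : Measure α}

lemma tendsto_measure_of_ae_eventually_mem [IsProbabilityMeasure μ] {s : ℕ → Set α}
    (h : ∀ᵐ x ∂μ, ∀ᶠ n in atTop, x ∈ s n) : Tendsto (fun n => μ (s n)) atTop (𝓝 1) := by
  set A : ℕ → Set α := fun n => ⋂ m ≥ n, s m
  have hA : Monotone A := fun n n' hn =>
    Set.biInter_mono (fun m hm => hn.trans hm) fun _ _ => le_rfl
  have hUnion : μ (⋃ n, A n) = 1 := by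
    rw [measure_congr (eventuallyEq_univ.2 ?_), measure_univ]
    filter_upwards [h] with x hx
    obtain ⟨n, hn⟩ := eventually_atTop.1 hx
    exact Set.mem_iUnion.2 ⟨n, Set.mem_iInter₂.2 hn⟩
  exact tendsto_of_tendsto_of_tendsto_of_le_of_le (hUnion ▸ tendsto_measure_iUnion_atTop hA)
    tendsto_const_nhds (fun n => measure_mono (Set.biInter_subset_of_mem le_rfl))
    fun n => prob_le_one

lemma tendsto_measure_abs_gt [IsFiniteMeasure μ] {W : α → ℝ} (hW : Measurable W) :
    Tendsto (fun r : ℝ => μ {x | r < |W x|}) atTop (𝓝 0) := by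
  have := tendsto_measure_norm_gt_of_isTightMeasureSet (isTightMeasureSet_singleton (μ := μ.map W))
  simp only [_root_.iSup_singleton, Real.norm_eq_abs,
    Measure.map_apply hW (measurableSet_lt measurable_const continuous_abs.measurable)] at this
  exact this

end MeasureTheory

namespace ProbabilityTheory

section Mgf

variable {Ω : Type*} [MeasurableSpace Ω] {μ : Measure Ω} {X : Ω → ℝ} {t : ℝ}

lemma integrable_exp_mul_of_ge [IsFiniteMeasure μ] (b : ℝ) (ht : t ≤ 0) (hX : AEMeasurable X μ)
    (hb : ∀ᵐ ω ∂μ, b ≤ X ω) : Integrable (fun ω => exp (t * X ω)) μ := by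
  simpa only [Pi.neg_apply, neg_mul_neg] using
    integrable_exp_mul_of_le (-t) (-b) (neg_nonneg.2 ht) hX.neg (hb.mono fun ω h => neg_le_neg h)

lemma one_add_mul_integral_le_mgf [IsProbabilityMeasure μ] (hX : Integrable X μ)
    (ht : Integrable (fun ω => exp (t * X ω)) μ) : 1 + t * ∫ ω, X ω ∂μ ≤ mgf X μ t := by
  have h : ∫ ω, (1 + t * X ω) ∂μ ≤ ∫ ω, exp (t * X ω) ∂μ :=
    integral_mono ((integrable_const 1).add (hX.const_mul t)) ht
      fun ω => (add_comm 1 (t * X ω)).trans_le (add_one_le_exp _)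
  rwa [integral_add (integrable_const 1) (hX.const_mul t), integral_const_mul, integral_const,
    probReal_univ, one_smul] at h

lemma tendsto_mgf_sub_one_div_nhdsLT [IsProbabilityMeasure μ] (hX : Integrable X μ)
    (hlow : ∀ ω, -1 ≤ X ω) :
    Tendsto (fun t => (mgf X μ t - 1) / t) (𝓝[<] 0) (𝓝 (∫ ω, X ω ∂μ)) := by
  have hint : ∀ t ≤ 0, Integrable (fun ω => exp (t * X ω)) μ := fun t ht =>
    integrable_exp_mul_of_ge (-1) ht hX.aemeasurable (ae_of_all _ hlow)
  have hslope : ∀ t ≤ 0, (mgf X μ t - 1) / t = ∫ ω, (exp (t * X ω) - 1) / t ∂μ := fun t ht => by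
    rw [integral_div, integral_sub (hint t ht) (integrable_const 1), integral_const,
      probReal_univ, one_smul, mgf]
  refine Tendsto.congr' (eventually_nhdsWithin_of_forall fun t ht => (hslope t ht.le).symm)
    (tendsto_integral_filter_of_dominated_convergence (fun ω => 2 * |X ω|) ?_ ?_
      (hX.abs.const_mul 2) ?_)
  · exact eventually_nhdsWithin_of_forall fun t ht =>
      (((hint t ht.le).sub (integrable_const 1)).div_const t).aestronglyMeasurable
  · filter_upwards [Ioo_mem_nhdsLT (show (-1 : ℝ) < 0 by norm_num)] with t ht
    refine ae_of_all _ fun ω => ?_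
    have htx : t * X ω ≤ 1 := by nlinarith [hlow ω, ht.1, ht.2]
    rw [norm_div, Real.norm_eq_abs, Real.norm_eq_abs, div_le_iff₀ (abs_pos.2 ht.2.ne)]
    calc |exp (t * X ω) - 1| ≤ 2 * |t * X ω| := abs_exp_sub_one_le_of_le_one htx
      _ = 2 * |X ω| * |t| := by rw [abs_mul]; ring
  · refine ae_of_all _ fun ω => ?_
    have hd : HasDerivAt (fun t => exp (t * X ω)) (X ω) 0 := by
      simpa using ((hasDerivAt_id (0 : ℝ)).mul_const (X ω)).exp
    simpa [div_eq_inv_mul] using hd.tendsto_slope_zero_left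

lemma one_lt_mgf_neg_one [IsProbabilityMeasure μ] (hXm : Measurable X) (hX : Integrable X μ)
    (hlow : ∀ ω, -1 ≤ X ω) (hmean : ∫ ω, X ω ∂μ = 0) (ha : 0 < μ.real {ω | X ω = -1}) :
    1 < mgf X μ (-1) := by
  set E := {ω | X ω = -1}
  have hE : MeasurableSet E := measurableSet_eq_fun hXm measurable_const
  have hpoint : ∀ ω, 1 - X ω + E.indicator (fun _ => exp 1 - 2) ω ≤ exp (-1 * X ω) := by
    intro ω
    by_cases hω : ω ∈ E
    · rw [Set.indicator_of_mem hω, show X ω = -1 from hω]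
      norm_num
    · rw [Set.indicator_of_notMem hω]
      linarith [add_one_le_exp (-1 * X ω)]
  have h1 : Integrable (fun ω => 1 - X ω) μ := (integrable_const 1).sub hX
  have h2 : Integrable (E.indicator fun _ => exp 1 - 2) μ := (integrable_const _).indicator hE
  have h : ∫ ω, (1 - X ω + E.indicator (fun _ => exp 1 - 2) ω) ∂μ ≤ mgf X μ (-1) :=
    integral_mono (h1.add h2)
      (integrable_exp_mul_of_ge (-1) (by norm_num) hX.aemeasurable (ae_of_all _ hlow)) hpoint
  rw [integral_add h1 h2, integral_sub (integrable_const 1) hX, integral_indicator_const _ hE,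
    integral_const, probReal_univ, hmean, smul_eq_mul, smul_eq_mul] at h
  have he : 2 < exp 1 := by linarith [add_one_lt_exp (one_ne_zero (α := ℝ))]
  exact lt_of_lt_of_le (by nlinarith) h

end Mgf

section Independence

variable {Ω ι β : Type*} [MeasurableSpace Ω] {μ : Measure Ω} [MeasurableSpace β]

lemma iIndepFun.indepFun_head_tail {Y : ℕ → Ω → β} (hY : ∀ i, Measurable (Y i))
    (h : iIndepFun Y μ) : IndepFun (Y 0) (fun ω i => Y (i + 1) ω) μ := by
  rw [IndepFun_iff_Indep]
  set m : ℕ → MeasurableSpace Ω := fun i => MeasurableSpace.comap (Y i) inferInstance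
  have key := indep_iSup_of_disjoint (fun i => (hY i).comap_le) ((iIndepFun_iff_iIndep _ _ _).1 h)
    (S := {0}) (T := {i | 0 < i}) (by simp)
  refine indep_of_indep_of_le_right (indep_of_indep_of_le_left key ?_) ?_
  · exact le_iSup₂ (f := fun i (_ : i ∈ ({0} : Set ℕ)) => m i) 0 rfl
  · simp_rw [MeasurableSpace.pi, MeasurableSpace.comap_iSup, MeasurableSpace.comap_comp,
      Function.comp_def]
    exact iSup_le fun i => le_iSup₂ (f := fun i (_ : i ∈ {i : ℕ | 0 < i}) => m i) (i + 1) i.succ_pos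

lemma iIndepFun.curry {κ : Type*} {X : ι → κ → Ω → β} (hX : ∀ i j, Measurable (X i j))
    (h : iIndepFun (fun p : ι × κ => X p.1 p.2) μ) : iIndepFun (fun i ω j => X i j ω) μ := by
  have := h.isProbabilityMeasure
  have : ∀ i j, IsProbabilityMeasure (μ.map (X i j)) :=
    fun i j => Measure.isProbabilityMeasure_map (hX i j).aemeasurable
  rw [iIndepFun_iff_map_fun_eq_infinitePi_map fun i => measurable_pi_lambda _ (hX i)]
  have hcurry : (fun ω i j => X i j ω) = MeasurableEquiv.curry ι κ β ∘ fun ω p => X p.1 p.2 ω :=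
    rfl
  have hjoint : μ.map (fun ω (p : ι × κ) => X p.1 p.2 ω)
      = Measure.infinitePi fun p : ι × κ => μ.map (X p.1 p.2) :=
    h.map_fun_eq_infinitePi_map fun p => hX p.1 p.2
  rw [hcurry, ← Measure.map_map (MeasurableEquiv.measurable (MeasurableEquiv.curry ι κ β))
      (measurable_pi_lambda _ fun p => hX p.1 p.2), hjoint,
    Measure.infinitePi_map_curry fun i j => μ.map (X i j)]
  congr 1
  funext i
  exact ((h.precomp (Prod.mk_right_injective i)).map_fun_eq_infinitePi_map (hX i)).symm

lemma iIndepFun.prodMk_of_sumElim {f g : ι → Ω → β} (hf : ∀ i, Measurable (f i))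
    (hg : ∀ i, Measurable (g i)) (h : iIndepFun (Sum.elim f g) μ) :
    iIndepFun (fun i ω => (f i ω, g i ω)) μ := by
  set e : ι × Bool → ι ⊕ ι := fun p => bif p.2 then .inl p.1 else .inr p.1
  have he : e.Injective := by rintro ⟨i, _ | _⟩ ⟨j, _ | _⟩ h <;> simp_all [e]
  have hmeas : ∀ i b, Measurable (Sum.elim f g (e (i, b))) := by
    rintro i (_ | _)
    exacts [hg i, hf i]
  exact (iIndepFun.curry hmeas (h.precomp he)).comp (fun _ v => (v true, v false))
    fun _ => by fun_prop

end Independence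

end ProbabilityTheory

namespace RandomWalk

-- `maxPartialSum x n = max_{m ≤ n} (x 0 + ⋯ + x (m - 1))`, computed by splitting off `x 0`.
def maxPartialSum (x : ℕ → ℝ) : ℕ → ℝ
  | 0 => 0
  | n + 1 => max 0 (x 0 + maxPartialSum (fun k => x (k + 1)) n)

lemma maxPartialSum_succ (x : ℕ → ℝ) (n : ℕ) :
    maxPartialSum x (n + 1) = max 0 (x 0 + maxPartialSum (fun k => x (k + 1)) n) := rfl

lemma maxPartialSum_nonneg (x : ℕ → ℝ) (n : ℕ) : 0 ≤ maxPartialSum x n := by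
  cases n <;> simp [maxPartialSum]

lemma maxPartialSum_congr {x y : ℕ → ℝ} {n : ℕ} (h : ∀ i < n, x i = y i) :
    maxPartialSum x n = maxPartialSum y n := by
  induction n generalizing x y with
  | zero => rfl
  | succ n ih =>
    simp only [maxPartialSum, h 0 n.succ_pos, ih fun i hi => h (i + 1) (by omega)]

lemma sum_range_le_maxPartialSum (x : ℕ → ℝ) {m n : ℕ} (hmn : m ≤ n) :
    ∑ i ∈ range m, x i ≤ maxPartialSum x n := by
  induction n generalizing x m with
  | zero => simp [Nat.le_zero.1 hmn, maxPartialSum]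
  | succ n ih =>
    rcases m with _ | m
    · simpa using maxPartialSum_nonneg x (n + 1)
    · rw [sum_range_succ', add_comm]
      exact le_max_of_le_right (add_le_add_right (ih _ (by omega)) _)

lemma exists_maxPartialSum_eq_sum (x : ℕ → ℝ) (n : ℕ) :
    ∃ m ≤ n, maxPartialSum x n = ∑ i ∈ range m, x i := by
  induction n generalizing x with
  | zero => exact ⟨0, le_rfl, rfl⟩
  | succ n ih =>
    obtain ⟨m, hm, heq⟩ := ih fun k => x (k + 1)
    rcases le_total (x 0 + maxPartialSum (fun k => x (k + 1)) n) 0 with h | h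
    · exact ⟨0, by omega, by simp [maxPartialSum, h]⟩
    · refine ⟨m + 1, by omega, ?_⟩
      rw [maxPartialSum, max_eq_right h, sum_range_succ', heq, add_comm]

lemma maxPartialSum_mono (x : ℕ → ℝ) : Monotone (maxPartialSum x) :=
  monotone_nat_of_le_succ fun n => by
    obtain ⟨m, hm, heq⟩ := exists_maxPartialSum_eq_sum x n
    exact heq ▸ sum_range_le_maxPartialSum x (by omega)

lemma maxPartialSum_le_of_sum_nonpos {x : ℕ → ℝ} {n₀ : ℕ}
    (h : ∀ m ≥ n₀, ∑ i ∈ range m, x i ≤ 0) (n : ℕ) :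
    maxPartialSum x n ≤ maxPartialSum x n₀ := by
  obtain ⟨m, -, heq⟩ := exists_maxPartialSum_eq_sum x n
  rw [heq]
  rcases le_total m n₀ with hm | hm
  · exact sum_range_le_maxPartialSum x hm
  · exact (h m hm).trans (maxPartialSum_nonneg x n₀)

lemma exists_maxPartialSum_eq_intCast {x : ℕ → ℝ} (hx : ∀ i, ∃ z : ℤ, x i = z) (n : ℕ) :
    ∃ z : ℤ, maxPartialSum x n = z := by
  choose z hz using hx
  obtain ⟨m, -, heq⟩ := exists_maxPartialSum_eq_sum x n
  exact ⟨∑ i ∈ range m, z i, by simp [heq, hz]⟩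

lemma continuous_maxPartialSum (n : ℕ) : Continuous fun x : ℕ → ℝ => maxPartialSum x n := by
  induction n with
  | zero => exact continuous_const
  | succ n ih =>
    exact continuous_const.max ((continuous_apply 0).add
      (ih.comp (continuous_pi fun k => continuous_apply (k + 1))))

def lindley (x : ℕ → ℝ) : ℕ → ℝ
  | 0 => max (x 0) 0
  | n + 1 => max (lindley x n + x (n + 1)) 0

lemma eq_lindley {x N : ℕ → ℝ} (h0 : N 0 = max (x 0) 0)
    (hrec : ∀ n, N (n + 1) = max (N n + x (n + 1)) 0) : N = lindley x := by
  funext n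
  induction n with
  | zero => exact h0
  | succ n ih => rw [hrec, ih, lindley]

-- `Polynomial.revAt L` reverses `0, …, L` and fixes the larger indices.
lemma lindley_eq_maxPartialSum (x : ℕ → ℝ) (L : ℕ) :
    lindley x L = maxPartialSum (fun i => x (Polynomial.revAt L i)) (L + 1) := by
  induction L with
  | zero => simp [lindley, maxPartialSum, Polynomial.revAt_le, max_comm]
  | succ L ih =>
    have hrev : ∀ i < L + 1, x (Polynomial.revAt L i) = x (Polynomial.revAt (L + 1) (i + 1)) :=
      fun i hi => by
        rw [Polynomial.revAt_le (by omega), Polynomial.revAt_le (by omega)]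
        congr 1
        omega
    rw [lindley, ih, maxPartialSum_succ _ (L + 1), Polynomial.revAt_le (Nat.zero_le _),
      Nat.sub_zero, maxPartialSum_congr hrev, max_comm, add_comm]

lemma sum_range_succ_le_lindley (x : ℕ → ℝ) (L : ℕ) :
    ∑ i ∈ range (L + 1), x i ≤ lindley x L := by
  induction L with
  | zero => simp [lindley]
  | succ L ih =>
    rw [sum_range_succ, lindley]
    exact le_max_of_le_left (by linarith)

section IID

variable {Ω : Type*} [MeasureSpace Ω] {X : ℕ → Ω → ℝ}

lemma measurable_maxPartialSum (hX : ∀ i, Measurable (X i)) (n : ℕ) :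
    Measurable fun ω => maxPartialSum (X · ω) n :=
  (continuous_maxPartialSum n).measurable.comp (measurable_pi_lambda _ hX)

lemma identDistrib_comp_injective (hind : iIndepFun X ℙ)
    (hid : ∀ i, IdentDistrib (X i) (X 0) ℙ ℙ) {e : ℕ → ℕ} (he : e.Injective) :
    IdentDistrib (fun ω i => X (e i) ω) (fun ω i => X i ω) ℙ ℙ :=
  IdentDistrib.pi (fun i => (hid (e i)).trans (hid i).symm) (hind.precomp he) hind

lemma identDistrib_lindley_maxPartialSum (hind : iIndepFun X ℙ)
    (hid : ∀ i, IdentDistrib (X i) (X 0) ℙ ℙ) (L : ℕ) :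
    IdentDistrib (fun ω => lindley (X · ω) L) (fun ω => maxPartialSum (X · ω) (L + 1)) ℙ ℙ := by
  simpa only [lindley_eq_maxPartialSum, Function.comp_def] using
    (identDistrib_comp_injective hind hid (Polynomial.revAt L).injective).comp
      (continuous_maxPartialSum (L + 1)).measurable

lemma identDistrib_maxPartialSum_shift (hind : iIndepFun X ℙ)
    (hid : ∀ i, IdentDistrib (X i) (X 0) ℙ ℙ) (n : ℕ) :
    IdentDistrib (fun ω => maxPartialSum (fun i => X (i + 1) ω) n)
      (fun ω => maxPartialSum (X · ω) n) ℙ ℙ :=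
  (identDistrib_comp_injective hind hid (add_left_injective 1)).comp
    (continuous_maxPartialSum n).measurable

theorem exists_ae_tendsto_maxPartialSum_of_integral_neg (hX : ∀ i, Measurable (X i))
    (hind : iIndepFun X ℙ) (hid : ∀ i, IdentDistrib (X i) (X 0) ℙ ℙ) (hint : Integrable (X 0))
    (hneg : ∫ ω, X 0 ω < 0) :
    ∃ W : Ω → ℝ, Measurable W ∧ ∀ᵐ ω, Tendsto (fun n => maxPartialSum (X · ω) n) atTop (𝓝 (W ω))
      ∧ ∀ n, maxPartialSum (X · ω) n ≤ W ω := by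
  refine ⟨fun ω => ⨆ n, maxPartialSum (X · ω) n, .iSup (measurable_maxPartialSum hX), ?_⟩
  filter_upwards [strong_law_ae_real X hint (fun i j hij => hind.indepFun hij) hid] with ω hω
  obtain ⟨n₀, hn₀⟩ := eventually_atTop.1 (hω.eventually (gt_mem_nhds hneg))
  have hbdd : BddAbove (Set.range fun n => maxPartialSum (X · ω) n) :=
    ⟨_, Set.forall_mem_range.2 <| maxPartialSum_le_of_sum_nonpos fun m hm =>
      le_of_not_gt fun h => (hn₀ m hm).not_ge (div_nonneg h.le m.cast_nonneg)⟩
  exact ⟨tendsto_atTop_ciSup (maxPartialSum_mono _) hbdd, fun n => le_ciSup hbdd n⟩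

theorem lindley_subcritical (hX : ∀ i, Measurable (X i)) (hind : iIndepFun X ℙ)
    (hid : ∀ i, IdentDistrib (X i) (X 0) ℙ ℙ) (hint : Integrable (X 0)) (hneg : ∫ ω, X 0 ω < 0) :
    (∃ W : Ω → ℝ, Measurable W ∧ ∀ f : BoundedContinuousFunction ℝ ℝ,
        Tendsto (fun L => ∫ ω, f (lindley (X · ω) L)) atTop (𝓝 (∫ ω, f (W ω))))
      ∧ ∀ δ : ℝ, 0 < δ → ∃ K : ℝ, ∀ L, ℙ {ω | K < |lindley (X · ω) L|} < ENNReal.ofReal δ := by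
  have := hind.isProbabilityMeasure
  obtain ⟨W, hWm, hW⟩ := exists_ae_tendsto_maxPartialSum_of_integral_neg hX hind hid hint hneg
  refine ⟨⟨W, hWm, fun f => ?_⟩, fun δ hδ => ?_⟩
  · have hlim : Tendsto (fun n => ∫ ω, f (maxPartialSum (X · ω) n)) atTop (𝓝 (∫ ω, f (W ω))) :=
      tendsto_integral_of_dominated_convergence (fun _ => ‖f‖)
        (fun n =>
          (f.continuous.measurable.comp (measurable_maxPartialSum hX n)).aestronglyMeasurable)
        (integrable_const _) (fun n => ae_of_all _ fun ω => f.norm_coe_le_norm _)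
        (hW.mono fun ω hω => (f.continuous.tendsto _).comp hω.1)
    exact (hlim.comp (tendsto_add_atTop_nat 1)).congr fun L =>
      ((identDistrib_lindley_maxPartialSum hind hid L).comp
        f.continuous.measurable).integral_eq.symm
  · obtain ⟨K, hK⟩ := ((tendsto_measure_abs_gt (μ := ℙ) hWm).eventually
      (gt_mem_nhds (ENNReal.ofReal_pos.2 hδ))).exists
    refine ⟨K, fun L => lt_of_le_of_lt ?_ hK⟩
    refine ((identDistrib_lindley_maxPartialSum hind hid L).measure_mem_eq
      (measurableSet_lt measurable_const continuous_abs.measurable)).trans_le ?_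
    refine measure_mono_ae (hW.mono fun ω hω => ?_)
    change K < |maxPartialSum (X · ω) (L + 1)| → K < |W ω|
    rw [abs_of_nonneg (maxPartialSum_nonneg _ _)]
    exact fun h => h.trans_le ((hω.2 _).trans (le_abs_self _))

theorem lindley_supercritical (hind : iIndepFun X ℙ) (hid : ∀ i, IdentDistrib (X i) (X 0) ℙ ℙ)
    (hint : Integrable (X 0)) (hpos : 0 < ∫ ω, X 0 ω) :
    Tendsto (fun L : ℕ => ℙ {ω | (∫ ω, X 0 ω) * L / 2 ≤ lindley (X · ω) L}) atTop (𝓝 1) := by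
  have := hind.isProbabilityMeasure
  apply tendsto_measure_of_ae_eventually_mem
  filter_upwards [strong_law_ae_real X hint (fun i j hij => hind.indepFun hij) hid] with ω hω
  filter_upwards [(hω.comp (tendsto_add_atTop_nat 1)).eventually
    (lt_mem_nhds (half_lt_self hpos))] with L hL
  have hL' := (lt_div_iff₀ (by positivity : (0 : ℝ) < (L + 1 : ℕ))).1 hL
  push_cast at hL'
  have := sum_range_succ_le_lindley (X · ω) L
  nlinarith

end IID

section Critical

variable {Ω : Type*} [MeasureSpace Ω] {X : ℕ → Ω → ℝ}

-- Skip-freeness: the integer `x 0 + P ≥ -1` is negative only if `x 0 = -1` and `P = 0`.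
lemma exp_mul_maxPartialSum_succ {x : ℕ → ℝ} (t : ℝ) (hlow : -1 ≤ x 0)
    (hZ : ∀ i, ∃ z : ℤ, x i = z) (n : ℕ) :
    exp (t * maxPartialSum x (n + 1)) = exp (t * (x 0 + maxPartialSum (fun k => x (k + 1)) n))
      + if x 0 = -1 ∧ maxPartialSum (fun k => x (k + 1)) n = 0 then 1 - exp (-t) else 0 := by
  rw [maxPartialSum_succ]
  set P := maxPartialSum (fun k => x (k + 1)) n
  have hP : 0 ≤ P := maxPartialSum_nonneg _ n
  by_cases h : x 0 = -1 ∧ P = 0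
  · rw [if_pos h, h.1, h.2]
    norm_num
  obtain ⟨z, hz⟩ : ∃ z : ℤ, x 0 + P = z := by
    obtain ⟨z₀, hz₀⟩ := hZ 0
    obtain ⟨z₁, hz₁⟩ := exists_maxPartialSum_eq_intCast (fun i => hZ (i + 1)) n
    exact ⟨z₀ + z₁, by push_cast; rw [← hz₀, ← hz₁]⟩
  have hge : (-1 : ℤ) ≤ z := by exact_mod_cast hz ▸ (by linarith : (-1 : ℝ) ≤ x 0 + P)
  have hne : z ≠ -1 := fun e => h (by
    have : x 0 + P = -1 := by rw [hz, e]; norm_num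
    constructor <;> linarith)
  have : 0 ≤ x 0 + P := by rw [hz]; exact_mod_cast (show (0 : ℤ) ≤ z by omega)
  rw [if_neg h, max_eq_right this, add_zero]

lemma mgf_maxPartialSum_succ (hX : ∀ i, Measurable (X i)) (hind : iIndepFun X ℙ)
    (hid : ∀ i, IdentDistrib (X i) (X 0) ℙ ℙ) (hlow : ∀ i ω, -1 ≤ X i ω)
    (hZ : ∀ i ω, ∃ z : ℤ, X i ω = z) {t : ℝ} (ht : t ≤ 0) (n : ℕ) :
    mgf (fun ω => maxPartialSum (X · ω) (n + 1)) ℙ t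
      = mgf (X 0) ℙ t * mgf (fun ω => maxPartialSum (X · ω) n) ℙ t
        + (1 - exp (-t)) * ((ℙ : Measure Ω).real {ω | X 0 ω = -1}
          * (ℙ : Measure Ω).real {ω | maxPartialSum (X · ω) n = 0}) := by
  have := hind.isProbabilityMeasure
  set P : Ω → ℝ := fun ω => maxPartialSum (fun i => X (i + 1) ω) n
  have hPm : Measurable P := measurable_maxPartialSum (fun i => hX (i + 1)) n
  have hPlaw := identDistrib_maxPartialSum_shift hind hid n
  have hindep : IndepFun (X 0) P ℙ :=
    (hind.indepFun_head_tail hX).comp measurable_id (continuous_maxPartialSum n).measurable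
  set E := X 0 ⁻¹' {-1} ∩ P ⁻¹' {0}
  have hEm : MeasurableSet E :=
    (hX 0 (measurableSet_singleton _)).inter (hPm (measurableSet_singleton _))
  have hsum : Integrable (fun ω => exp (t * (X 0 ω + P ω))) ℙ :=
    integrable_exp_mul_of_ge (-1) ht ((hX 0).add hPm).aemeasurable
      (ae_of_all _ fun ω => by linarith [hlow 0 ω, maxPartialSum_nonneg (fun i => X (i + 1) ω) n])
  have hpoint : ∀ ω, exp (t * maxPartialSum (X · ω) (n + 1))
      = exp (t * (X 0 ω + P ω)) + E.indicator (fun _ => 1 - exp (-t)) ω := fun ω => by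
    classical
    rw [exp_mul_maxPartialSum_succ t (hlow 0 ω) (hZ · ω) n, Set.indicator_apply]
    congr
  calc mgf (fun ω => maxPartialSum (X · ω) (n + 1)) ℙ t
      = mgf (X 0 + P) ℙ t + (1 - exp (-t)) * (ℙ : Measure Ω).real E := by
        rw [mgf, integral_congr_ae (ae_of_all _ hpoint),
          integral_add hsum ((integrable_const _).indicator hEm), integral_indicator_const _ hEm,
          smul_eq_mul, mul_comm ((ℙ : Measure Ω).real E)]
        rfl
    _ = _ := by
        rw [hindep.mgf_add ((hX 0).const_mul t).exp.aestronglyMeasurable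
            (hPm.const_mul t).exp.aestronglyMeasurable,
          mgf_congr_identDistrib hPlaw, measureReal_def,
          hindep.measure_inter_preimage_eq_mul _ _ (measurableSet_singleton _)
            (measurableSet_singleton _), ENNReal.toReal_mul,
          hPlaw.measure_mem_eq (measurableSet_singleton _)]
        rfl

lemma tendsto_mgf_maxPartialSum [IsFiniteMeasure (ℙ : Measure Ω)] (hX : ∀ i, Measurable (X i))
    {t : ℝ} (ht : t ≤ 0) :
    Tendsto (fun n => mgf (fun ω => maxPartialSum (X · ω) n) ℙ t) atTop
      (𝓝 (⨅ n, mgf (fun ω => maxPartialSum (X · ω) n) ℙ t)) := by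
  refine tendsto_atTop_ciInf (antitone_nat_of_succ_le fun n => ?_) ⟨0, ?_⟩
  · exact mgf_anti_of_nonpos (ae_of_all _ fun ω => maxPartialSum_mono _ n.le_succ) ht
      (integrable_exp_mul_of_ge 0 ht (measurable_maxPartialSum hX n).aemeasurable
        (ae_of_all _ fun ω => maxPartialSum_nonneg _ n))
  · rintro _ ⟨n, rfl⟩
    exact mgf_nonneg

lemma tendsto_measureReal_maxPartialSum_eq_zero [IsFiniteMeasure (ℙ : Measure Ω)] :
    Tendsto (fun n => (ℙ : Measure Ω).real {ω | maxPartialSum (X · ω) n = 0}) atTop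
      (𝓝 (⨅ n, (ℙ : Measure Ω).real {ω | maxPartialSum (X · ω) n = 0})) := by
  refine tendsto_atTop_ciInf (antitone_nat_of_succ_le fun n => ?_) ⟨0, ?_⟩
  · refine measureReal_mono (fun ω (hω : maxPartialSum (X · ω) (n + 1) = 0) => ?_)
    exact le_antisymm (hω ▸ maxPartialSum_mono _ n.le_succ) (maxPartialSum_nonneg _ n)
  · rintro _ ⟨n, rfl⟩
    exact measureReal_nonneg

lemma iInf_mgf_maxPartialSum_eq (hX : ∀ i, Measurable (X i)) (hind : iIndepFun X ℙ)
    (hid : ∀ i, IdentDistrib (X i) (X 0) ℙ ℙ) (hlow : ∀ i ω, -1 ≤ X i ω)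
    (hZ : ∀ i ω, ∃ z : ℤ, X i ω = z) {t : ℝ} (ht : t ≤ 0) :
    ⨅ n, mgf (fun ω => maxPartialSum (X · ω) n) ℙ t
      = mgf (X 0) ℙ t * (⨅ n, mgf (fun ω => maxPartialSum (X · ω) n) ℙ t)
        + (1 - exp (-t)) * ((ℙ : Measure Ω).real {ω | X 0 ω = -1}
          * ⨅ n, (ℙ : Measure Ω).real {ω | maxPartialSum (X · ω) n = 0}) := by
  have := hind.isProbabilityMeasure
  have hlim := ((tendsto_mgf_maxPartialSum hX ht).const_mul (mgf (X 0) ℙ t)).add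
    (((tendsto_measureReal_maxPartialSum_eq_zero (X := X)).const_mul
      ((ℙ : Measure Ω).real {ω | X 0 ω = -1})).const_mul (1 - exp (-t)))
  exact tendsto_nhds_unique ((tendsto_mgf_maxPartialSum hX ht).comp (tendsto_add_atTop_nat 1))
    (hlim.congr fun n => (mgf_maxPartialSum_succ hX hind hid hlow hZ ht n).symm)

lemma iInf_measureReal_maxPartialSum_eq_zero (hX : ∀ i, Measurable (X i))
    (hind : iIndepFun X ℙ) (hid : ∀ i, IdentDistrib (X i) (X 0) ℙ ℙ) (hint : Integrable (X 0))
    (hmean : ∫ ω, X 0 ω = 0) (hlow : ∀ i ω, -1 ≤ X i ω) (hZ : ∀ i ω, ∃ z : ℤ, X i ω = z)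
    (ha : 0 < (ℙ : Measure Ω).real {ω | X 0 ω = -1}) :
    ⨅ n, (ℙ : Measure Ω).real {ω | maxPartialSum (X · ω) n = 0} = 0 := by
  have := hind.isProbabilityMeasure
  set a := (ℙ : Measure Ω).real {ω | X 0 ω = -1}
  set b := ⨅ n, (ℙ : Measure Ω).real {ω | maxPartialSum (X · ω) n = 0}
  have hb : 0 ≤ b := le_ciInf fun n => measureReal_nonneg
  have hbound : ∀ t < 0, a * b ≤ (mgf (X 0) ℙ t - 1) / -t := by
    intro t ht
    set φ := ⨅ n, mgf (fun ω => maxPartialSum (X · ω) n) ℙ t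
    have hfix := iInf_mgf_maxPartialSum_eq hX hind hid hlow hZ ht.le
    have hφ1 : φ ≤ 1 := (ciInf_le ⟨0, by rintro _ ⟨n, rfl⟩; exact mgf_nonneg⟩ 0).trans
      (by simp [maxPartialSum])
    have hf1 : 1 ≤ mgf (X 0) ℙ t := by
      simpa [hmean] using one_add_mul_integral_le_mgf hint
        (integrable_exp_mul_of_ge (-1) ht.le (hX 0).aemeasurable (ae_of_all _ (hlow 0)))
    rw [le_div_iff₀ (neg_pos.2 ht)]
    calc a * b * -t ≤ a * b * (exp (-t) - 1) :=
          mul_le_mul_of_nonneg_left (by linarith [add_one_le_exp (-t)]) (mul_nonneg ha.le hb)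
      _ = φ * (mgf (X 0) ℙ t - 1) := by linear_combination hfix
      _ ≤ mgf (X 0) ℙ t - 1 := mul_le_of_le_one_left (by linarith) hφ1
  have hlim : Tendsto (fun t => (mgf (X 0) ℙ t - 1) / -t) (𝓝[<] 0) (𝓝 0) := by
    simpa [hmean, div_neg] using (tendsto_mgf_sub_one_div_nhdsLT hint (hlow 0)).neg
  have hab : a * b ≤ 0 := ge_of_tendsto hlim (eventually_nhdsWithin_of_forall hbound)
  exact le_antisymm (le_of_mul_le_mul_left (by simpa using hab) ha) hb

theorem lindley_critical (hX : ∀ i, Measurable (X i)) (hind : iIndepFun X ℙ)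
    (hid : ∀ i, IdentDistrib (X i) (X 0) ℙ ℙ) (hint : Integrable (X 0))
    (hmean : ∫ ω, X 0 ω = 0) (hlow : ∀ i ω, -1 ≤ X i ω) (hZ : ∀ i ω, ∃ z : ℤ, X i ω = z)
    (ha : 0 < (ℙ : Measure Ω).real {ω | X 0 ω = -1}) (K : ℝ) :
    Tendsto (fun L => ℙ {ω | lindley (X · ω) L ≤ K}) atTop (𝓝 0) := by
  have := hind.isProbabilityMeasure
  have hfix := iInf_mgf_maxPartialSum_eq hX hind hid hlow hZ (t := -1) (by norm_num)
  rw [iInf_measureReal_maxPartialSum_eq_zero hX hind hid hint hmean hlow hZ ha, mul_zero,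
    mul_zero, add_zero] at hfix
  have hφ : ⨅ n, mgf (fun ω => maxPartialSum (X · ω) n) ℙ (-1) = 0 := by
    have hf := one_lt_mgf_neg_one (hX 0) hint (hlow 0) hmean ha
    refine (mul_eq_zero.1 (?_ : _ * (mgf (X 0) ℙ (-1) - 1) = 0)).resolve_right (by linarith)
    linear_combination -hfix
  have hchernoff : ∀ L, ℙ {ω | lindley (X · ω) L ≤ K}
      ≤ ENNReal.ofReal (exp K * mgf (fun ω => maxPartialSum (X · ω) (L + 1)) ℙ (-1)) := by
    intro L
    refine ((identDistrib_lindley_maxPartialSum hind hid L).measure_mem_eq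
      measurableSet_Iic).trans_le ?_
    rw [← ENNReal.ofReal_toReal (measure_ne_top _ _)]
    refine ENNReal.ofReal_le_ofReal ?_
    have := measure_le_le_exp_mul_mgf (μ := ℙ) K (by norm_num : (-1 : ℝ) ≤ 0)
      (integrable_exp_mul_of_ge 0 (by norm_num) (measurable_maxPartialSum hX (L + 1)).aemeasurable
        (ae_of_all _ fun ω => maxPartialSum_nonneg _ _))
    rwa [neg_neg, one_mul] at this
  have hlim := ENNReal.tendsto_ofReal
    (((tendsto_mgf_maxPartialSum hX (t := -1) (by norm_num)).comp
      (tendsto_add_atTop_nat 1)).const_mul (exp K))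
  rw [hφ, mul_zero, ENNReal.ofReal_zero] at hlim
  exact tendsto_of_tendsto_of_tendsto_of_le_of_le tendsto_const_nhds hlim (fun _ => zero_le)
    hchernoff

end Critical

end RandomWalk

namespace ProbabilityTheory

section Increments

variable {Ω : Type*} [MeasurableSpace Ω] {μ : Measure Ω}

lemma identDistrib_of_forall_le_one [IsFiniteMeasure μ] {Y Y' : Ω → ℕ} (hY : Measurable Y)
    (hY' : Measurable Y') (h1 : ∀ ω, Y ω ≤ 1) (h1' : ∀ ω, Y' ω ≤ 1)
    (h : μ {ω | Y ω = 1} = μ {ω | Y' ω = 1}) : IdentDistrib Y Y' μ μ := by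
  refine ⟨hY.aemeasurable, hY'.aemeasurable, Measure.ext_of_singleton fun n => ?_⟩
  rw [Measure.map_apply hY (measurableSet_singleton n),
    Measure.map_apply hY' (measurableSet_singleton n)]
  have hzero : ∀ Z : Ω → ℕ, (∀ ω, Z ω ≤ 1) → Z ⁻¹' {0} = {ω | Z ω = 1}ᶜ := fun Z hZ => by
    ext ω
    have := hZ ω
    simp only [Set.mem_preimage, Set.mem_singleton_iff, Set.mem_compl_iff, Set.mem_ofPred_eq]
    omega
  rcases n with _ | _ | n
  · rw [hzero Y h1, hzero Y' h1',
      measure_compl (measurableSet_eq_fun hY measurable_const) (measure_ne_top _ _),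
      measure_compl (measurableSet_eq_fun hY' measurable_const) (measure_ne_top _ _), h]
  · exact h
  · have hempty : ∀ Z : Ω → ℕ, (∀ ω, Z ω ≤ 1) → Z ⁻¹' {n + 2} = ∅ := fun Z hZ =>
      Set.eq_empty_of_forall_notMem fun ω hω => by have := hZ ω; simp_all
    rw [hempty Y h1, hempty Y' h1']

lemma integral_natCast_of_forall_le_one {Y : Ω → ℕ} (hY : Measurable Y) (h1 : ∀ ω, Y ω ≤ 1) :
    ∫ ω, (Y ω : ℝ) ∂μ = μ.real {ω | Y ω = 1} := by
  rw [← integral_indicator_one (measurableSet_eq_fun hY measurable_const)]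
  congr 1
  funext ω
  rcases Nat.le_one_iff_eq_zero_or_eq_one.1 (h1 ω) with h | h <;> simp [Set.indicator, h]

lemma one_sub_integral_le_measureReal_eq_zero [IsProbabilityMeasure μ] {η : Ω → ℕ}
    (hη : Measurable η) (hint : Integrable (fun ω => (η ω : ℝ)) μ) :
    1 - ∫ ω, (η ω : ℝ) ∂μ ≤ μ.real {ω | η ω = 0} := by
  have hE : MeasurableSet {ω | η ω = 0} := measurableSet_eq_fun hη measurable_const
  have h : ∫ ω, (1 - (η ω : ℝ)) ∂μ ≤ ∫ ω, {ω | η ω = 0}.indicator 1 ω ∂μ := by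
    refine integral_mono ((integrable_const 1).sub hint) ((integrable_const 1).indicator hE)
      fun ω => ?_
    by_cases h : η ω = 0
    · simp [h]
    · have : (1 : ℝ) ≤ η ω := by exact_mod_cast Nat.one_le_iff_ne_zero.2 h
      simp only [Set.indicator_of_notMem (show ω ∉ {ω | η ω = 0} from h)]
      linarith
  rwa [integral_sub (integrable_const 1) hint, integral_const, probReal_univ, one_smul,
    integral_indicator_one hE] at h

lemma iIndepFun_natCast_sub {η Y : ℕ → Ω → ℕ} (hη : ∀ i, Measurable (η i))
    (hY : ∀ i, Measurable (Y i)) (hindep : iIndepFun (Sum.elim η Y) μ) :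
    iIndepFun (fun i ω => (η i ω : ℝ) - Y i ω) μ :=
  (hindep.prodMk_of_sumElim hη hY).comp (fun _ q => (q.1 : ℝ) - q.2)
    fun _ => measurable_of_countable _

lemma identDistrib_natCast_sub {η Y : ℕ → Ω → ℕ} (hindep : iIndepFun (Sum.elim η Y) μ)
    (hηident : ∀ i, IdentDistrib (η i) (η 0) μ μ) (hYident : ∀ i, IdentDistrib (Y i) (Y 0) μ μ)
    (i : ℕ) :
    IdentDistrib (fun ω => (η i ω : ℝ) - Y i ω) (fun ω => (η 0 ω : ℝ) - Y 0 ω) μ μ :=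
  have := hindep.isProbabilityMeasure
  ((hηident i).prodMk (hYident i) (hindep.indepFun Sum.inl_ne_inr)
    (hindep.indepFun Sum.inl_ne_inr)).comp
    (measurable_of_countable fun q : ℕ × ℕ => (q.1 : ℝ) - q.2)

lemma measureReal_natCast_sub_eq_neg_one {η Y : Ω → ℕ} (hindep : IndepFun η Y μ)
    (hY1 : ∀ ω, Y ω ≤ 1) :
    μ.real {ω | (η ω : ℝ) - Y ω = -1} = μ.real {ω | η ω = 0} * μ.real {ω | Y ω = 1} := by
  have hE : {ω | (η ω : ℝ) - Y ω = -1} = η ⁻¹' {0} ∩ Y ⁻¹' {1} := by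
    ext ω
    have := hY1 ω
    simp only [Set.mem_ofPred_eq, Set.mem_inter_iff, Set.mem_preimage, Set.mem_singleton_iff]
    constructor
    · intro h
      have : (η ω : ℤ) + 1 = Y ω := by exact_mod_cast (by linarith : (η ω : ℝ) + 1 = Y ω)
      omega
    · rintro ⟨h0, h1⟩
      simp [h0, h1]
  rw [hE, measureReal_def, hindep.measure_inter_preimage_eq_mul _ _ (measurableSet_singleton _)
    (measurableSet_singleton _), ENNReal.toReal_mul]
  rfl

end Increments

end ProbabilityTheory

open RandomWalk

theorem arw_totally_asymmetric_critical_general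
    {Ω : Type*} [MeasureSpace Ω] [IsProbabilityMeasure (ℙ : Measure Ω)]
    (lam mu : ℝ) (hlam : 0 < lam)
    (η Y : ℕ → Ω → ℕ)
    (hηmeas : ∀ i, Measurable (η i)) (hYmeas : ∀ i, Measurable (Y i))
    -- joint independence of the whole family (η_i)_i ∪ (Y_i)_i
    (hindep : iIndepFun (Sum.elim η Y : ℕ ⊕ ℕ → Ω → ℕ) ℙ)
    -- (η_i) identically distributed, integrable, with mean μ
    (hηident : ∀ i, IdentDistrib (η i) (η 0) ℙ ℙ)
    (hηint : Integrable (fun ω => (η 0 ω : ℝ)) ℙ)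
    (hηmean : ∫ ω, (η 0 ω : ℝ) ∂ℙ = mu)
    -- (Y_i) i.i.d. Bernoulli(λ/(1+λ))
    (hY01 : ∀ i ω, Y i ω ≤ 1)
    (hYdist : ∀ i, ℙ {ω | Y i ω = 1} = ENNReal.ofReal (lam / (1 + lam)))
    -- the Lindley recursion driven by ξ_i = η_i − Y_i
    (N : ℕ → Ω → ℝ)
    (hN0 : ∀ ω, N 0 ω = max ((η 0 ω : ℝ) - (Y 0 ω : ℝ)) 0)
    (hNrec : ∀ i ω, N (i + 1) ω = max (N i ω + ((η (i+1) ω : ℝ) - (Y (i+1) ω : ℝ))) 0) :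
    -- (i) subcritical: convergence in distribution to an a.s. finite limit, hence tightness
    (mu < lam / (1 + lam) →
      (∃ W : Ω → ℝ, Measurable W ∧
        ∀ f : BoundedContinuousFunction ℝ ℝ,
          Tendsto (fun L : ℕ => ∫ ω, f (N L ω) ∂ℙ) atTop (𝓝 (∫ ω, f (W ω) ∂ℙ)))
      ∧ ∀ δ : ℝ, 0 < δ → ∃ K : ℝ, ∀ L : ℕ, ℙ {ω | K < |N L ω|} < ENNReal.ofReal δ)
    ∧
    -- (ii) critical: N_L → ∞ in probability
    (mu = lam / (1 + lam) →
      ∀ K : ℝ, Tendsto (fun L : ℕ => ℙ {ω | N L ω ≤ K}) atTop (𝓝 0))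
    ∧
    -- (iii) supercritical
    (lam / (1 + lam) < mu →
      Tendsto (fun L : ℕ => ℙ {ω | (mu - lam / (1 + lam)) * L / 2 ≤ N L ω}) atTop (𝓝 1)) := by
  set p := lam / (1 + lam)
  obtain ⟨hp0, hp1⟩ : 0 < p ∧ p < 1 :=
    ⟨div_pos hlam (by linarith), (div_lt_one (by linarith)).2 (by linarith)⟩
  set ξ : ℕ → Ω → ℝ := fun i ω => (η i ω : ℝ) - Y i ω
  have hξm : ∀ i, Measurable (ξ i) := fun i => by fun_prop
  have hξind : iIndepFun ξ ℙ := iIndepFun_natCast_sub hηmeas hYmeas hindep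
  have hξid : ∀ i, IdentDistrib (ξ i) (ξ 0) ℙ ℙ := identDistrib_natCast_sub hindep hηident
    fun i => identDistrib_of_forall_le_one (hYmeas i) (hYmeas 0) (hY01 i) (hY01 0)
      (by rw [hYdist, hYdist])
  have hY1 : ∀ i ω, (Y i ω : ℝ) ≤ 1 := fun i ω => by exact_mod_cast hY01 i ω
  have hYint : Integrable (fun ω => (Y 0 ω : ℝ)) ℙ :=
    .of_mem_Icc 0 1 (by fun_prop) (ae_of_all _ fun ω => ⟨by positivity, hY1 0 ω⟩)
  have hp : (ℙ : Measure Ω).real {ω | Y 0 ω = 1} = p := by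
    rw [measureReal_def, hYdist, ENNReal.toReal_ofReal hp0.le]
  have hξmean : ∫ ω, ξ 0 ω = mu - p := by
    rw [integral_sub hηint hYint, hηmean, integral_natCast_of_forall_le_one (hYmeas 0) (hY01 0), hp]
  obtain rfl : N = fun L ω => lindley (ξ · ω) L :=
    funext₂ fun L ω => congrFun (eq_lindley (N := (N · ω)) (hN0 ω) (hNrec · ω)) L
  refine ⟨fun h => ?_, fun h K => ?_, fun h => ?_⟩
  · exact lindley_subcritical hξm hξind hξid (hηint.sub hYint) (by linarith)
  · refine lindley_critical hξm hξind hξid (hηint.sub hYint) (by linarith)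
      (fun i ω => by linarith [hY1 i ω, (η i ω).cast_nonneg (α := ℝ)])
      (fun i ω => ⟨η i ω - Y i ω, by push_cast; rfl⟩) ?_ K
    have hηY : IndepFun (η 0) (Y 0) ℙ := hindep.indepFun Sum.inl_ne_inr
    rw [measureReal_natCast_sub_eq_neg_one hηY (hY01 0), hp]
    exact mul_pos (by linarith [one_sub_integral_le_measureReal_eq_zero (hηmeas 0) hηint]) hp0
  · simpa only [hξmean] using lindley_supercritical hξind hξid (hηint.sub hYint) (by linarith)

/-- **Critical behavior of the one-dimensional totally asymmetric activated random walk**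
(probabilistic content: the reflected random walk driven by `ξ_i = η_i − Y_i`).

Let `0 < λ` (finite) and `μ > 0`.  Let `(η_i)` be i.i.d. ℕ-valued integrable random variables
with mean `μ`, and `(Y_i)` i.i.d. Bernoulli(`λ/(1+λ)`) random variables, the whole family
`(η_i)_i ∪ (Y_i)_i` being mutually independent.  Let `N` be the reflected (Lindley) recursion
driven by `ξ_i = η_i − Y_i`:  `N₀ = max(ξ₀,0)`, `N_{i+1} = max(N_i + ξ_{i+1}, 0)`.  Then:
(i) if `μ < λ/(1+λ)`, `(N_L)` converges in distribution to an a.s. finite random variable,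
    and in particular is tight;
(ii) if `μ = λ/(1+λ)`, `N_L → ∞` in probability;
(iii) if `μ > λ/(1+λ)`, `P[N_L ≥ (μ − λ/(1+λ))L/2] → 1`. -/
theorem arw_totally_asymmetric_critical
    {Ω : Type*} [MeasureSpace Ω] [IsProbabilityMeasure (ℙ : Measure Ω)]
    (lam mu : ℝ) (hlam : 0 < lam) (hmu : 0 < mu)
    (η Y : ℕ → Ω → ℕ)
    (hηmeas : ∀ i, Measurable (η i)) (hYmeas : ∀ i, Measurable (Y i))
    -- joint independence of the whole family (η_i)_i ∪ (Y_i)_i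
    (hindep : iIndepFun (Sum.elim η Y : ℕ ⊕ ℕ → Ω → ℕ) ℙ)
    -- (η_i) identically distributed, integrable, with mean μ
    (hηident : ∀ i, IdentDistrib (η i) (η 0) ℙ ℙ)
    (hηint : Integrable (fun ω => (η 0 ω : ℝ)) ℙ)
    (hηmean : ∫ ω, (η 0 ω : ℝ) ∂ℙ = mu)
    -- (Y_i) i.i.d. Bernoulli(λ/(1+λ))
    (hY01 : ∀ i ω, Y i ω ≤ 1)
    (hYdist : ∀ i, ℙ {ω | Y i ω = 1} = ENNReal.ofReal (lam / (1 + lam)))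
    -- the Lindley recursion driven by ξ_i = η_i − Y_i
    (N : ℕ → Ω → ℝ)
    (hN0 : ∀ ω, N 0 ω = max ((η 0 ω : ℝ) - (Y 0 ω : ℝ)) 0)
    (hNrec : ∀ i ω, N (i + 1) ω = max (N i ω + ((η (i+1) ω : ℝ) - (Y (i+1) ω : ℝ))) 0) :
    -- (i) subcritical: convergence in distribution to an a.s. finite limit, hence tightness
    (mu < lam / (1 + lam) →
      (∃ W : Ω → ℝ, Measurable W ∧
        ∀ f : BoundedContinuousFunction ℝ ℝ,
          Tendsto (fun L : ℕ => ∫ ω, f (N L ω) ∂ℙ) atTop (𝓝 (∫ ω, f (W ω) ∂ℙ)))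
      ∧ ∀ δ : ℝ, 0 < δ → ∃ K : ℝ, ∀ L : ℕ, ℙ {ω | K < |N L ω|} < ENNReal.ofReal δ)
    ∧
    -- (ii) critical: N_L → ∞ in probability
    (mu = lam / (1 + lam) →
      ∀ K : ℝ, Tendsto (fun L : ℕ => ℙ {ω | N L ω ≤ K}) atTop (𝓝 0))
    ∧
    -- (iii) supercritical
    (lam / (1 + lam) < mu →
      Tendsto (fun L : ℕ => ℙ {ω | (mu - lam / (1 + lam)) * L / 2 ≤ N L ω}) atTop (𝓝 1)) :=
  arw_totally_asymmetric_critical_general lam mu hlam η Y hηmeas hYmeas hindep hηident hηint hηmean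
    hY01 hYdist N hN0 hNrec
end

section
/- Let (ξ_i)_{i≥0} be i.i.d. real-valued random variables and let N be the reflected (Lindley) recursion driven by (ξ_i). Then for every n ≥ 0, N_n has the same distribution as max(0, S_0, S_1, …, S_n), where S_k = ξ_0 + ξ_1 + ⋯ + ξ_k. -/
/-!
Unrolling the recursion gives `N_n = max(0, ξ_n, ξ_n + ξ_{n-1}, …, ξ_n + ⋯ + ξ_0)`, the running
maximum of the walk driven by the time-reversed increments `ξ_n, …, ξ_0`. For i.i.d. increments the
reversed vector `(ξ_n, …, ξ_0)` has the same law as `(ξ_0, …, ξ_n)`: both are the product of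
`n + 1` copies of the law of `ξ_0`.
-/

open MeasureTheory ProbabilityTheory Finset

theorem Finset.sup'_range_succ' {α : Type*} [SemilatticeSup α] (f : ℕ → α) (n : ℕ) :
    (range (n + 1 + 1)).sup' nonempty_range_add_one f
      = f 0 ⊔ (range (n + 1)).sup' nonempty_range_add_one fun k => f (k + 1) :=
  eq_of_forall_ge_iff fun c => by
    simp only [sup'_le_iff, sup_le_iff, mem_range, Nat.forall_lt_succ_left']

def runningMax (x : ℕ → ℝ) (n : ℕ) : ℝ :=
  max 0 ((range (n + 1)).sup' nonempty_range_add_one fun k => ∑ i ∈ range (k + 1), x i)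

lemma runningMax_zero (x : ℕ → ℝ) : runningMax x 0 = max 0 (x 0) := by
  simp [runningMax]

lemma runningMax_succ (x : ℕ → ℝ) (n : ℕ) :
    runningMax x (n + 1) = max 0 (x 0 + runningMax (fun i => x (i + 1)) n) := by
  simp only [runningMax, sup'_range_succ', zero_add, sum_range_one, sum_range_succ' _ (_ + 1),
    add_comm _ (x 0), add_sup', add_max, add_zero]

lemma runningMax_congr {x y : ℕ → ℝ} {n : ℕ} (h : ∀ i ≤ n, x i = y i) :
    runningMax x n = runningMax y n := by
  unfold runningMax
  congr 1
  refine sup'_congr _ rfl fun k hk => sum_congr rfl fun i hi => h i ?_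
  simp only [mem_range] at hk hi
  omega

lemma measurable_runningMax (n : ℕ) : Measurable fun x : ℕ → ℝ => runningMax x n := by
  unfold runningMax
  fun_prop

lemma lindley_eq_runningMax_reverse {x N : ℕ → ℝ} (h0 : N 0 = max (x 0) 0)
    (hrec : ∀ i, N (i + 1) = max (N i + x (i + 1)) 0) (n : ℕ) :
    N n = runningMax (fun i => x (n - i)) n := by
  induction n with
  | zero => rw [h0, runningMax_zero, max_comm]
  | succ n ih =>
    rw [hrec, ih, runningMax_succ, max_comm, add_comm]
    simp only [Nat.sub_zero, Nat.add_sub_add_right]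

namespace ProbabilityTheory

lemma iIndepFun.map_precomp_eq_pi {Ω ι κ β : Type*} [MeasurableSpace Ω] [MeasurableSpace β]
    [Fintype κ] {μ : Measure Ω} {ξ : ι → Ω → β} (hmeas : ∀ i, Measurable (ξ i))
    (hindep : iIndepFun ξ μ) {i₀ : ι} (hident : ∀ i, IdentDistrib (ξ i) (ξ i₀) μ μ)
    {g : κ → ι} (hg : g.Injective) :
    μ.map (fun ω k => ξ (g k) ω) = Measure.pi fun _ => μ.map (ξ i₀) := by
  rw [(hindep.precomp hg).map_fun_eq_pi_map fun k => (hmeas (g k)).aemeasurable]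
  simp_rw [(hident _).map_eq]

lemma iIndepFun.identDistrib_precomp {Ω ι κ β : Type*} [MeasurableSpace Ω] [MeasurableSpace β]
    [Fintype κ] {μ : Measure Ω} {ξ : ι → Ω → β} (hmeas : ∀ i, Measurable (ξ i))
    (hindep : iIndepFun ξ μ) {i₀ : ι} (hident : ∀ i, IdentDistrib (ξ i) (ξ i₀) μ μ)
    {g h : κ → ι} (hg : g.Injective) (hh : h.Injective) :
    IdentDistrib (fun ω k => ξ (g k) ω) (fun ω k => ξ (h k) ω) μ μ where
  aemeasurable_fst := (measurable_pi_lambda _ fun k => hmeas (g k)).aemeasurable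
  aemeasurable_snd := (measurable_pi_lambda _ fun k => hmeas (h k)).aemeasurable
  map_eq := by
    rw [hindep.map_precomp_eq_pi hmeas hident hg, hindep.map_precomp_eq_pi hmeas hident hh]

end ProbabilityTheory

/-- **Lindley recursion has the law of the running maximum of the random walk.**
Let `(ξ_i)` be i.i.d. real random variables and let `N` be the reflected (Lindley) recursion
driven by `(ξ_i)`: `N₀ = max(ξ₀,0)`, `N_{i+1} = max(N_i + ξ_{i+1}, 0)`.  Then for every `n`,
`N_n` has the same distribution as `max(0, S₀, S₁, …, S_n)` where `S_k = ξ₀ + ⋯ + ξ_k`. -/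
theorem lindley_identDistrib_running_max
    {Ω : Type*} [MeasureSpace Ω] [IsProbabilityMeasure (ℙ : Measure Ω)]
    (ξ : ℕ → Ω → ℝ)
    (hmeas : ∀ i, Measurable (ξ i))
    (hindep : iIndepFun ξ ℙ)
    (hident : ∀ i, IdentDistrib (ξ i) (ξ 0) ℙ ℙ)
    (N : ℕ → Ω → ℝ)
    (hN0 : ∀ ω, N 0 ω = max (ξ 0 ω) 0)
    (hNrec : ∀ i ω, N (i + 1) ω = max (N i ω + ξ (i + 1) ω) 0) :
    ∀ n : ℕ,
      IdentDistrib (N n)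
        (fun ω => max 0 ((Finset.range (n + 1)).sup' Finset.nonempty_range_add_one
          (fun k => ∑ i ∈ Finset.range (k + 1), ξ i ω)))
        ℙ ℙ := by
  intro n
  have hreverse : IdentDistrib (fun ω (k : Fin (n + 1)) => ξ (n - k) ω)
      (fun ω (k : Fin (n + 1)) => ξ k ω) ℙ ℙ :=
    hindep.identDistrib_precomp hmeas hident
      (fun k l hkl => Fin.ext (by omega)) Fin.val_injective
  have hF : Measurable fun y : Fin (n + 1) → ℝ => runningMax (fun i => y (Fin.clamp i n)) n :=
    (measurable_runningMax n).comp (measurable_pi_lambda _ fun i => measurable_pi_apply _)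
  have hclamp : ∀ i ≤ n, (Fin.clamp i n : ℕ) = i := fun i hi => min_eq_left hi
  convert hreverse.comp hF using 1
  · funext ω
    rw [lindley_eq_runningMax_reverse (x := (ξ · ω)) (N := (N · ω)) (hN0 ω) (hNrec · ω) n]
    exact runningMax_congr fun i hi => by simp only [hclamp i hi]
  · funext ω
    exact runningMax_congr fun i hi => by simp only [hclamp i hi]
end

section
/- Let d ≥ 1. Let 𝓑 be a random subset of ℤ^d whose law is invariant under every translation of ℤ^d, ergodic with respect to the translation by each standard basis vector, and satisfies P[𝓑 ≠ ∅] = 1. Let (X_n)_{n≥0} be a random walk on ℤ^d started at X_0 = 0 whose i.i.d. steps have a nearest-neighbor distribution p with p(e_1) > 0, and which is independent of 𝓑. Then P[X_n ∈ 𝓑 for infinitely many n] = 1. -/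
/-!
Look at the scenery from the walker: the skew product
`(f, u) ↦ (f (· + u 0), (u (n + 1))ₙ)` on sceneries × step sequences preserves
`law 𝓑 ⊗ p^ℕ`, and `X_n ∈ 𝓑` exactly when the `n`-th iterate lies in
`{f | f 0 = true} × univ`. That set has positive measure because `𝓑` is stationary and a.s.
non-empty, so by Poincaré recurrence it suffices to show that the skew product is ergodic. For an
invariant set `I`, the conditional probability `f ↦ P(I | scenery f)` is a bounded `p`-harmonic
function of the scenery, so it is invariant under the shift by `e₁` (an `L²` argument using
`p(e₁) > 0`) and therefore a.s. equal to a constant `c`. Peeling off one step at a time, `I` then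
has conditional probability `c` given any cylinder event, so `P(I) = c · P(I)` and `P(I) = c`,
forcing `c ∈ {0, 1}`.
-/

open MeasureTheory ProbabilityTheory Filter Set Measure
open scoped ENNReal

theorem Ergodic.ae_frequently_iterate_mem {α : Type*} [MeasurableSpace α] {f : α → α}
    {μ : Measure α} [IsFiniteMeasure μ] (hf : Ergodic f μ) {s : Set α} (hs : MeasurableSet s)
    (h0 : μ s ≠ 0) : ∀ᵐ x ∂μ, ∃ᶠ n in atTop, f^[n] x ∈ s := by
  set R := limsup (fun n => f^[n] ⁻¹' s) atTop
  have hR : MeasurableSet R :=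
    MeasurableSet.measurableSet_limsup fun n => hf.measurable.iterate n hs
  have hmem (x : α) : x ∈ R ↔ ∃ᶠ n in atTop, f^[n] x ∈ s := mem_limsup_iff_frequently_mem
  have hinv : f ⁻¹' R = R := by
    ext x
    simp only [mem_preimage, hmem, ← Function.iterate_succ_apply]
    conv_rhs => rw [← map_add_atTop_eq_nat 1]
    exact frequently_map.symm
  refine ((hf.ae_mem_or_ae_notMem hR hinv).resolve_right fun hnot => h0 ?_).mono
    fun x => (hmem x).1
  refine measure_eq_zero_iff_ae_notMem.2 ?_
  filter_upwards [hnot, hf.conservative.ae_mem_imp_frequently_image_mem hs.nullMeasurableSet]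
    with x hxR hrec hxs using hxR ((hmem x).2 (hrec hxs))

namespace RandomScenery

section Harmonic

variable {α : Type*} {ψ : α → ℝ} {C : ℝ}

lemma abs_mul_le_of_abs_le (hC : ∀ x, |ψ x| ≤ C) (x y : α) : |ψ x * ψ y| ≤ C * C := by
  rw [abs_mul]
  exact mul_le_mul (hC x) (hC y) (abs_nonneg _) ((abs_nonneg _).trans (hC x))

variable [MeasurableSpace α] {μ : Measure α} [IsFiniteMeasure μ]

lemma integral_sq_sub_comp_eq {T : α → α} (hT : MeasurePreserving T μ μ) (hψ : Measurable ψ)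
    (hC : ∀ x, |ψ x| ≤ C) :
    ∫ x, (ψ x - ψ (T x)) ^ 2 ∂μ = 2 * ∫ x, ψ x ^ 2 ∂μ - 2 * ∫ x, ψ x * ψ (T x) ∂μ := by
  have hsq : Integrable (fun x => ψ x ^ 2) μ :=
    .of_bound (by fun_prop) (C * C) (ae_of_all _ fun x => by
      rw [sq]; exact abs_mul_le_of_abs_le hC x x)
  have hsqT : Integrable (fun x => ψ (T x) ^ 2) μ := hT.integrable_comp_of_integrable hsq
  have hcross : Integrable (fun x => ψ x * ψ (T x)) μ :=
    .of_bound (hψ.mul (hψ.comp hT.measurable)).aestronglyMeasurable (C * C)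
      (ae_of_all _ fun x => abs_mul_le_of_abs_le hC _ _)
  have hsum : Integrable (fun x => ψ x ^ 2 + ψ (T x) ^ 2) μ := hsq.add hsqT
  have hinv : ∫ x, ψ (T x) ^ 2 ∂μ = ∫ x, ψ x ^ 2 ∂μ := by
    rw [← integral_map hT.measurable.aemeasurable (hψ.pow_const 2).aestronglyMeasurable,
      hT.map_eq]
  calc ∫ x, (ψ x - ψ (T x)) ^ 2 ∂μ
      = ∫ x, (ψ x ^ 2 + ψ (T x) ^ 2 - 2 * (ψ x * ψ (T x))) ∂μ := by
        congr with x; ring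
    _ = 2 * ∫ x, ψ x ^ 2 ∂μ - 2 * ∫ x, ψ x * ψ (T x) ∂μ := by
        rw [integral_sub hsum (hcross.const_mul 2), integral_add hsq hsqT, integral_const_mul,
          hinv]
        ring

theorem comp_ae_eq_of_eq_integral_comp {G : Type*} [MeasurableSpace G] [Countable G]
    [MeasurableSingletonClass G] {p : Measure G} [IsProbabilityMeasure p] {T : G → α → α}
    (hT : ∀ z, MeasurePreserving (T z) μ μ) (hψ : Measurable ψ) (hC : ∀ x, |ψ x| ≤ C)
    (harm : ∀ x, ψ x = ∫ z, ψ (T z x) ∂p) {z₀ : G} (hz₀ : p {z₀} ≠ 0) :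
    ψ ∘ T z₀ =ᵐ[μ] ψ := by
  have hTm : Measurable fun q : G × α => T q.1 q.2 :=
    measurable_from_prod_countable_right fun z => (hT z).measurable
  have hprod : Integrable (fun q : G × α => ψ q.2 * ψ (T q.1 q.2)) (p.prod μ) :=
    .of_bound (by fun_prop) (C * C) (ae_of_all _ fun q => abs_mul_le_of_abs_le hC _ _)
  set R : G → ℝ := fun z => ∫ x, ψ x * ψ (T z x) ∂μ
  have hR : Integrable R p := hprod.integral_prod_left
  have hR_mean : ∫ z, R z ∂p = ∫ x, ψ x ^ 2 ∂μ := by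
    rw [integral_integral_swap hprod]
    congr with x
    rw [integral_const_mul, ← harm, sq]
  have hdefect := fun z => integral_sq_sub_comp_eq (hT z) hψ hC
  have hdefect_zero : ∫ z, ∫ x, (ψ x - ψ (T z x)) ^ 2 ∂μ ∂p = 0 := by
    simp_rw [hdefect]
    rw [integral_sub (integrable_const _) (hR.const_mul 2), integral_const_mul 2 R, hR_mean]
    simp
  have hdefect_z₀ : ∫ x, (ψ x - ψ (T z₀ x)) ^ 2 ∂μ = 0 := by
    refine ae_iff_of_countable.1 ((integral_eq_zero_iff_of_nonneg
      (fun z => integral_nonneg fun x => sq_nonneg _) ?_).1 hdefect_zero) z₀ hz₀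
    simp_rw [hdefect]
    exact (integrable_const _).sub (hR.const_mul 2)
  have hdiff : Integrable (fun x => (ψ x - ψ (T z₀ x)) ^ 2) μ :=
    .of_bound (by fun_prop) ((C + C) ^ 2) (ae_of_all _ fun x => by
      rw [Real.norm_eq_abs, abs_pow]
      exact pow_le_pow_left₀ (abs_nonneg _)
        ((abs_sub _ _).trans (add_le_add (hC _) (hC _))) 2)
  filter_upwards [(integral_eq_zero_iff_of_nonneg (fun x => sq_nonneg _) hdiff).1 hdefect_z₀]
    with x hx
  simpa [sub_eq_zero, eq_comm] using hx

end Harmonic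

section HeadTail

variable {X : Type*}

def headTail (u : ℕ → X) : X × (ℕ → X) := (u 0, fun n => u (n + 1))

lemma measurable_headTail [MeasurableSpace X] : Measurable (headTail (X := X)) := by
  unfold headTail; fun_prop

lemma pi_range_succ_eq_preimage_headTail (t : ℕ → Set X) (n : ℕ) :
    (Finset.range (n + 1) : Set ℕ).pi t =
      headTail ⁻¹' (t 0 ×ˢ (Finset.range n : Set ℕ).pi fun i => t (i + 1)) := by
  ext u
  simp only [Finset.coe_range, Set.mem_pi, mem_Iio, headTail, mem_preimage, mem_prod]
  constructor
  · intro h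
    exact ⟨h 0 n.succ_pos, fun i hi => h (i + 1) (by omega)⟩
  · rintro ⟨h0, h⟩ (_ | i) hi
    exacts [h0, h i (by omega)]

lemma exists_pi_eq_pi_range (S : Finset ℕ) (t : ℕ → Set X) :
    ∃ n, (S : Set ℕ).pi t =
      (Finset.range n : Set ℕ).pi fun i => if i ∈ S then t i else univ := by
  classical
  obtain ⟨n, hn⟩ := S.exists_nat_subset_range
  refine ⟨n, ?_⟩
  rw [pi_if, pi_univ, inter_univ]
  congr 1
  ext i
  simpa using fun h => hn h

variable {α : Type*} [MeasurableSpace α] [MeasurableSpace X]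

lemma ext_prod_pi_range {ν₁ ν₂ : Measure (α × (ℕ → X))} [IsFiniteMeasure ν₁]
    (h : ∀ s, MeasurableSet s → ∀ n (t : ℕ → Set X), (∀ i, MeasurableSet (t i)) →
      ν₁ (s ×ˢ (Finset.range n : Set ℕ).pi t) = ν₂ (s ×ˢ (Finset.range n : Set ℕ).pi t)) :
    ν₁ = ν₂ := by
  have huniv : univ ∈ squareCylinders fun _ : ℕ => {t : Set X | MeasurableSet t} :=
    ⟨∅, fun _ => univ, by simp, by simp⟩
  refine ext_of_generate_finite _
    (generateFrom_eq_prod MeasurableSpace.generateFrom_measurableSet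
      generateFrom_squareCylinders isCountablySpanning_measurableSet
      ⟨fun _ => univ, fun _ => huniv, iUnion_const _⟩).symm
    (MeasurableSpace.isPiSystem_measurableSet.prod (isPiSystem_squareCylinders
      (fun _ => MeasurableSpace.isPiSystem_measurableSet) fun _ => .univ)) ?_ ?_
  · rintro _ ⟨s, hs, _, ⟨S, t, ht, rfl⟩, rfl⟩
    classical
    obtain ⟨n, hn⟩ := exists_pi_eq_pi_range S t
    rw [hn]
    exact h s hs n _ fun i => by split_ifs; exacts [ht i trivial, .univ]
  · simpa using h univ .univ 0 (fun _ => univ) fun _ => .univ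

lemma infinitePi_map_headTail (p : Measure X) [IsProbabilityMeasure p] :
    (infinitePi fun _ : ℕ => p).map headTail = p.prod (infinitePi fun _ : ℕ => p) := by
  refine ext_prod_pi_range fun s hs n t ht => ?_
  have hcons : (Finset.range (n + 1) : Set ℕ).pi (fun i => Nat.casesOn i s t) =
      headTail ⁻¹' (s ×ˢ (Finset.range n : Set ℕ).pi t) :=
    pi_range_succ_eq_preimage_headTail _ n
  rw [map_apply measurable_headTail (hs.prod (.pi (to_countable _) fun i _ => ht i)),
    ← hcons, prod_prod, infinitePi_pi, infinitePi_pi, Finset.prod_range_succ']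
  · exact mul_comm _ _
  · exact fun i _ => ht i
  · rintro (_ | i) _
    exacts [hs, ht i]

end HeadTail

section Scenery

variable {G β : Type*} [AddCommMonoid G]

def shift (z : G) (f : G → β) : G → β := fun x => f (x + z)

def skew (y : (G → β) × (ℕ → G)) : (G → β) × (ℕ → G) :=
  (shift (y.2 0) y.1, fun n => y.2 (n + 1))

lemma skew_iterate (n : ℕ) (f : G → β) (u : ℕ → G) :
    skew^[n] (f, u) = (shift (∑ i ∈ Finset.range n, u i) f, fun k => u (k + n)) := by
  induction n generalizing f u with
  | zero => simp [shift, funext_iff]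
  | succ n ih =>
    rw [Function.iterate_succ_apply, skew, ih]
    ext1
    · funext x
      simp only [shift, Finset.sum_range_succ', add_assoc]
    · funext k; simp only [add_assoc]

variable [MeasurableSpace β] {μ : Measure (G → β)}

lemma measurable_shift (z : G) : Measurable (shift (β := β) z) :=
  measurable_pi_lambda _ fun x => measurable_pi_apply (x + z)

lemma measure_setOf_apply_zero_ne_zero [Countable G] [NeZero μ] [MeasurableSingletonClass β]
    (hμ : ∀ z, MeasurePreserving (shift z) μ μ) {b : β} (h : ∀ᵐ f ∂μ, ∃ x, f x = b) :
    μ {f | f 0 = b} ≠ 0 := by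
  intro h0
  have hmeas : MeasurableSet {f : G → β | f 0 = b} :=
    (measurableSet_singleton b).preimage (measurable_pi_apply 0)
  have hnull (x : G) : μ {f | f x = b} = 0 := by
    have hpre : {f : G → β | f x = b} = shift x ⁻¹' {f | f 0 = b} := by
      ext f; simp [shift]
    rw [hpre, (hμ x).measure_preimage hmeas.nullMeasurableSet, h0]
  obtain ⟨f, ⟨x, hx⟩, hne⟩ :=
    (h.and (ae_all_iff.2 fun x => measure_eq_zero_iff_ae_notMem.1 (hnull x))).exists
  exact hne x hx

variable [MeasurableSpace G] [Countable G] [MeasurableSingletonClass G]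

lemma measurable_shift_uncurry : Measurable fun q : (G → β) × G => shift q.2 q.1 :=
  measurable_from_prod_countable_left measurable_shift

lemma measurable_skew : Measurable (skew (G := G) (β := β)) :=
  (measurable_shift_uncurry.comp (measurable_fst.prodMk
    ((measurable_pi_apply 0).comp measurable_snd))).prodMk
      (measurable_pi_lambda _ fun n => (measurable_pi_apply (n + 1)).comp measurable_snd)

variable {p : Measure G} [IsProbabilityMeasure p]

lemma infinitePi_slice_skew_preimage_inter {E : Set ((G → β) × (ℕ → G))}
    (hE : MeasurableSet E) (f : G → β) (t₀ : Set G) :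
    infinitePi (fun _ => p) (Prod.mk f ⁻¹' (skew ⁻¹' E) ∩ {u | u 0 ∈ t₀}) =
      ∫⁻ z in t₀, infinitePi (fun _ => p) (Prod.mk (shift z f) ⁻¹' E) ∂p := by
  set F : Set (G × (ℕ → G)) := (fun q => (shift q.1 f, q.2)) ⁻¹' E
  have hF : MeasurableSet F :=
    (Measurable.prodMap (f := fun z => shift z f) .of_discrete measurable_id) hE
  have hpre : Prod.mk f ⁻¹' (skew ⁻¹' E) ∩ {u | u 0 ∈ t₀} =
      headTail ⁻¹' (F ∩ t₀ ×ˢ univ) := by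
    ext u; simp [F, skew, headTail, and_comm]
  rw [hpre, ← map_apply measurable_headTail (hF.inter (.prod .of_discrete .univ)),
    infinitePi_map_headTail, ← restrict_apply' (.prod .of_discrete .univ),
    ← restrict_prod_eq_prod_univ, prod_apply hF]
  rfl

lemma infinitePi_slice_skew_preimage {E : Set ((G → β) × (ℕ → G))} (hE : MeasurableSet E)
    (f : G → β) :
    infinitePi (fun _ => p) (Prod.mk f ⁻¹' (skew ⁻¹' E)) =
      ∫⁻ z, infinitePi (fun _ => p) (Prod.mk (shift z f) ⁻¹' E) ∂p := by
  simpa using infinitePi_slice_skew_preimage_inter (p := p) hE f univ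

lemma measurePreserving_skew [SFinite μ] (hμ : ∀ z, MeasurePreserving (shift z) μ μ) :
    MeasurePreserving skew (μ.prod (infinitePi fun _ => p)) (μ.prod (infinitePi fun _ => p)) := by
  refine ⟨measurable_skew, ext fun E hE => ?_⟩
  set κ := infinitePi fun _ : ℕ => p
  have hg : Measurable fun f => κ (Prod.mk f ⁻¹' E) := measurable_measure_prodMk_left hE
  rw [map_apply measurable_skew hE, prod_apply (measurable_skew hE), prod_apply hE]
  calc ∫⁻ f, κ (Prod.mk f ⁻¹' (skew ⁻¹' E)) ∂μ
      = ∫⁻ f, ∫⁻ z, κ (Prod.mk (shift z f) ⁻¹' E) ∂p ∂μ :=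
        lintegral_congr (infinitePi_slice_skew_preimage hE)
    _ = ∫⁻ z, ∫⁻ f, κ (Prod.mk (shift z f) ⁻¹' E) ∂μ ∂p :=
        lintegral_lintegral_swap (hg.comp measurable_shift_uncurry).aemeasurable
    _ = ∫⁻ f, κ (Prod.mk f ⁻¹' E) ∂μ := by
        simp_rw [(hμ _).lintegral_comp hg, lintegral_const, measure_univ, mul_one]

lemma exists_ae_infinitePi_slice_eq_of_skew_invariant [IsFiniteMeasure μ]
    (hμ : ∀ z, MeasurePreserving (shift z) μ μ) {z₀ : G} (hz₀ : p {z₀} ≠ 0)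
    (herg : Ergodic (shift z₀) μ) {I : Set ((G → β) × (ℕ → G))} (hI : MeasurableSet I)
    (hinv : skew ⁻¹' I = I) :
    ∃ c, ∀ᵐ f ∂μ, infinitePi (fun _ => p) (Prod.mk f ⁻¹' I) = c := by
  set Ψ := fun f => infinitePi (fun _ => p) (Prod.mk f ⁻¹' I)
  have hΨ : Measurable Ψ := measurable_measure_prodMk_left hI
  have harm (f : G → β) : (Ψ f).toReal = ∫ z, (Ψ (shift z f)).toReal ∂p := by
    rw [integral_toReal (Measurable.of_discrete (f := fun z => Ψ (shift z f))).aemeasurable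
      (ae_of_all _ fun _ => measure_lt_top _ _), ← infinitePi_slice_skew_preimage hI, hinv]
  have hbdd (f : G → β) : |(Ψ f).toReal| ≤ 1 := by
    rw [abs_of_nonneg ENNReal.toReal_nonneg]
    exact ENNReal.toReal_le_of_le_ofReal zero_le_one (by simpa using prob_le_one)
  obtain ⟨c, hc⟩ := herg.ae_eq_const_of_ae_eq_comp_ae hΨ.ennreal_toReal.aestronglyMeasurable
    (comp_ae_eq_of_eq_integral_comp hμ hΨ.ennreal_toReal hbdd harm hz₀)
  refine ⟨ENNReal.ofReal c, hc.mono fun f hf => ?_⟩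
  rw [← ENNReal.ofReal_toReal (measure_ne_top _ (Prod.mk f ⁻¹' I))]
  exact congrArg ENNReal.ofReal hf

lemma ae_infinitePi_slice_inter_pi_range (hμ : ∀ z, MeasurePreserving (shift z) μ μ)
    {I : Set ((G → β) × (ℕ → G))} (hI : MeasurableSet I) (hinv : skew ⁻¹' I = I) {c : ℝ≥0∞}
    (hc : ∀ᵐ f ∂μ, infinitePi (fun _ => p) (Prod.mk f ⁻¹' I) = c) (n : ℕ) (t : ℕ → Set G) :
    ∀ᵐ f ∂μ, infinitePi (fun _ => p) (Prod.mk f ⁻¹' I ∩ (Finset.range n : Set ℕ).pi t) =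
      c * infinitePi (fun _ => p) ((Finset.range n : Set ℕ).pi t) := by
  induction n generalizing t with
  | zero => simpa using hc
  | succ n ih =>
    set t' := fun i => t (i + 1)
    have hcyl : MeasurableSet ((Finset.range n : Set ℕ).pi t') :=
      .pi (to_countable _) fun _ _ => .of_discrete
    filter_upwards [ae_all_iff.2 fun z => (hμ z).quasiMeasurePreserving.ae (ih t')] with f hf
    have hset : Prod.mk f ⁻¹' I ∩ (Finset.range (n + 1) : Set ℕ).pi t =
        Prod.mk f ⁻¹' (skew ⁻¹' (I ∩ univ ×ˢ (Finset.range n : Set ℕ).pi t')) ∩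
          {u | u 0 ∈ t 0} := by
      rw [pi_range_succ_eq_preimage_headTail]
      conv_lhs => rw [← hinv]
      ext u
      simp [skew, headTail, t']
      tauto
    rw [hset, infinitePi_slice_skew_preimage_inter (hI.inter (MeasurableSet.univ.prod hcyl)),
      pi_range_succ_eq_preimage_headTail, ← map_apply measurable_headTail (.prod .of_discrete hcyl),
      infinitePi_map_headTail, prod_prod]
    simp_rw [preimage_inter, mk_preimage_prod_right (mem_univ _), hf]
    rw [setLIntegral_const]
    ring

theorem ergodic_skew [IsProbabilityMeasure μ] (hμ : ∀ z, MeasurePreserving (shift z) μ μ)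
    {z₀ : G} (hz₀ : p {z₀} ≠ 0) (herg : Ergodic (shift z₀) μ) :
    Ergodic skew (μ.prod (infinitePi fun _ => p)) := by
  refine ⟨measurePreserving_skew hμ, ⟨fun I hI hinv => ?_⟩⟩
  set ν := μ.prod (infinitePi fun _ => p)
  obtain ⟨c, hc⟩ := exists_ae_infinitePi_slice_eq_of_skew_invariant hμ hz₀ herg hI hinv
  have hrestrict : ν.restrict I = c • ν := by
    refine ext_prod_pi_range fun s hs n t ht => ?_
    have hcyl : MeasurableSet ((Finset.range n : Set ℕ).pi t) :=
      .pi (to_countable _) fun i _ => ht i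
    rw [restrict_apply (hs.prod hcyl), inter_comm, ← restrict_apply' (hs.prod hcyl),
      ← prod_restrict, prod_apply hI, Measure.smul_apply, prod_prod, smul_eq_mul]
    simp_rw [restrict_apply' hcyl]
    rw [lintegral_congr_ae (ae_restrict_of_ae
      (ae_infinitePi_slice_inter_pi_range hμ hI hinv hc n t)), setLIntegral_const]
    ring
  have hνI : ν I = c := by simpa using congrArg (· univ) hrestrict
  have hνI_sq : ν I = ν I * ν I := by
    simpa [restrict_apply hI, hνI] using congrArg (· I) hrestrict
  rcases eq_or_ne (ν I) 0 with h0 | h0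
  · exact eventuallyConst_set'.2 (.inl (ae_eq_empty.2 h0))
  · have h1 : ν I = 1 := (ENNReal.mul_eq_left h0 (measure_ne_top _ _)).1 hνI_sq.symm
    exact eventuallyConst_set'.2 (.inr (ae_eq_univ.2 ((prob_compl_eq_zero_iff hI).2 h1)))

end Scenery

end RandomScenery

open RandomScenery

theorem random_walk_hits_ergodic_set_general
    {Ω : Type*} [MeasureSpace Ω] [IsProbabilityMeasure (ℙ : Measure Ω)]
    (d : ℕ) (hd : 0 < d)
    (B : Ω → (Fin d → ℤ) → Bool)
    (hBmeas : Measurable B)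
    -- law invariant under every translation
    (hBinv : ∀ z : Fin d → ℤ,
      (ℙ : Measure Ω).map (fun ω => fun x => B ω (x + z)) = (ℙ : Measure Ω).map B)
    -- ergodic with respect to the translation by each standard basis vector
    (hBerg : ∀ j : Fin d,
      Ergodic (fun f : (Fin d → ℤ) → Bool => fun x => f (x + Pi.single j 1))
        ((ℙ : Measure Ω).map B))
    -- 𝓑 is almost surely non-empty
    (hBne : ∀ᵐ ω ∂(ℙ : Measure Ω), ∃ x, B ω x = true)
    -- i.i.d. nearest-neighbor steps
    (ζ : ℕ → Ω → (Fin d → ℤ))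
    (hζmeas : ∀ n, Measurable (ζ n))
    (hζindep : iIndepFun ζ ℙ)
    (hζident : ∀ n, IdentDistrib (ζ n) (ζ 0) ℙ ℙ)
    -- p(e₁) > 0
    (hpe1 : 0 < ℙ {ω | ζ 0 ω = Pi.single (⟨0, hd⟩ : Fin d) 1})
    -- the walk is independent of 𝓑
    (hindepB : IndepFun B (fun ω => fun n => ζ n ω) ℙ) :
    ∀ᵐ ω ∂(ℙ : Measure Ω),
      {n : ℕ | B ω (∑ i ∈ Finset.range n, ζ i ω) = true}.Infinite := by
  set μ := (ℙ : Measure Ω).map B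
  set p := (ℙ : Measure Ω).map (ζ 0)
  have : IsProbabilityMeasure μ := isProbabilityMeasure_map hBmeas.aemeasurable
  have : IsProbabilityMeasure p := isProbabilityMeasure_map (hζmeas 0).aemeasurable
  have hZ : Measurable fun ω n => ζ n ω := measurable_pi_lambda _ hζmeas
  have hlaw : (ℙ : Measure Ω).map (fun ω => (B ω, fun n => ζ n ω)) =
      μ.prod (infinitePi fun _ => p) := by
    rw [(indepFun_iff_map_prod_eq_prod_map_map hBmeas.aemeasurable hZ.aemeasurable).1 hindepB,
      hζindep.map_fun_eq_infinitePi_map hζmeas]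
    simp_rw [(hζident _).map_eq]
    rfl
  have hμ (z : Fin d → ℤ) : MeasurePreserving (shift z) μ μ :=
    ⟨measurable_shift z, by rw [map_map (measurable_shift z) hBmeas]; exact hBinv z⟩
  have hp : p {Pi.single ⟨0, hd⟩ 1} ≠ 0 := by
    rw [map_apply (hζmeas 0) (measurableSet_singleton _)]
    exact hpe1.ne'
  have hmeas : MeasurableSet {f : (Fin d → ℤ) → Bool | f 0 = true} := by measurability
  have hA : μ {f | f 0 = true} ≠ 0 := measure_setOf_apply_zero_ne_zero hμ
    ((ae_map_iff hBmeas.aemeasurable (by measurability)).2 hBne)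
  have hrec := (ergodic_skew hμ hp (hBerg _)).ae_frequently_iterate_mem (hmeas.prod .univ)
    (by rwa [prod_prod, measure_univ, mul_one])
  rw [← hlaw] at hrec
  filter_upwards [ae_of_ae_map (by fun_prop) hrec] with ω hω
  simpa [← Nat.frequently_atTop_iff_infinite, skew_iterate, shift] using hω

/-- **A random walk hits an ergodic positive-density set infinitely often.**
Let `𝓑` be a random subset of `ℤ^d` (encoded by its indicator field `B : Ω → (ℤ^d → Bool)`)
whose law is invariant under every translation of `ℤ^d`, ergodic with respect to the
translation by each standard basis vector, and almost surely non-empty.  Let `(X_n)` be a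
nearest-neighbor random walk started at `0` with step distribution satisfying `p(e₁) > 0`,
independent of `𝓑`.  Then almost surely `X_n ∈ 𝓑` for infinitely many `n`. -/
theorem random_walk_hits_ergodic_set
    {Ω : Type*} [MeasureSpace Ω] [IsProbabilityMeasure (ℙ : Measure Ω)]
    (d : ℕ) (hd : 0 < d)
    (B : Ω → (Fin d → ℤ) → Bool)
    (hBmeas : Measurable B)
    -- law invariant under every translation
    (hBinv : ∀ z : Fin d → ℤ,
      (ℙ : Measure Ω).map (fun ω => fun x => B ω (x + z)) = (ℙ : Measure Ω).map B)
    -- ergodic with respect to the translation by each standard basis vector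
    (hBerg : ∀ j : Fin d,
      Ergodic (fun f : (Fin d → ℤ) → Bool => fun x => f (x + Pi.single j 1))
        ((ℙ : Measure Ω).map B))
    -- 𝓑 is almost surely non-empty
    (hBne : ∀ᵐ ω ∂(ℙ : Measure Ω), ∃ x, B ω x = true)
    -- i.i.d. nearest-neighbor steps
    (ζ : ℕ → Ω → (Fin d → ℤ))
    (hζmeas : ∀ n, Measurable (ζ n))
    (hζindep : iIndepFun ζ ℙ)
    (hζident : ∀ n, IdentDistrib (ζ n) (ζ 0) ℙ ℙ)
    (hζnn : ∀ᵐ ω ∂(ℙ : Measure Ω),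
      ∃ j : Fin d, ζ 0 ω = Pi.single j 1 ∨ ζ 0 ω = -Pi.single j 1)
    -- p(e₁) > 0
    (hpe1 : 0 < ℙ {ω | ζ 0 ω = Pi.single (⟨0, hd⟩ : Fin d) 1})
    -- the walk is independent of 𝓑
    (hindepB : IndepFun B (fun ω => fun n => ζ n ω) ℙ) :
    ∀ᵐ ω ∂(ℙ : Measure Ω),
      {n : ℕ | B ω (∑ i ∈ Finset.range n, ζ i ω) = true}.Infinite :=
  random_walk_hits_ergodic_set_general d hd B hBmeas hBinv hBerg hBne ζ hζmeas hζindep hζident hpe1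
    hindepB
end

section
/- Abelian property: fix a configuration η and an instruction sequence at each site. If α and β are two legal toppling sequences for η, both contained in a finite set V ⊆ ℤ^d and both stabilizing η in V, then m_α(x) = m_β(x) for every x ∈ ℤ^d. -/
open Filter

/-! Definitions for the activated random walk toppling system on `ℤ^d`.

A configuration is a map `η : ℤ^d → ℕ ∪ {𝔰}`; we encode `ℕ ∪ {𝔰}` as `Option ℕ`,
where `some k` means `k` active particles at the site and `none` means a single
sleeping particle `𝔰`. -/

/-- Sites of the lattice `ℤ^d`. -/
abbrev Site (d : ℕ) := Fin d → ℤ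

/-- A configuration: `some k` = `k` active particles, `none` = the sleeping state `𝔰`. -/
abbrev Config (d : ℕ) := Site d → Option ℕ

/-- An instruction: either `sleep`, or `jump` to the nearest neighbor in direction
`±e_j` (`s = true` for `+e_j`, `s = false` for `−e_j`). -/
inductive Instr (d : ℕ) where
  | sleep : Instr d
  | jump (j : Fin d) (s : Bool) : Instr d
  deriving DecidableEq

/-- The nearest neighbor of `x` in direction `±e_j`. -/
def nbr {d : ℕ} (x : Site d) (j : Fin d) (s : Bool) : Site d :=
  x + (if s then (1 : ℤ) else -1) • Pi.single j 1

/-- A site is unstable when it holds at least one active particle. -/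
def Unstable {d : ℕ} (η : Config d) (x : Site d) : Prop :=
  ∃ k : ℕ, η x = some (k + 1)

/-- Add one particle at `y`: an arriving particle wakes up a sleeping particle
(`𝔰` becomes `2`). -/
def addParticle {d : ℕ} (η : Config d) (y : Site d) : Config d :=
  Function.update η y (match η y with
    | none => some 2
    | some m => some (m + 1))

/-- Apply a single instruction at the site `x`: a `sleep` instruction turns `1` into `𝔰`
and does nothing if there are at least `2` particles; a `jump` instruction moves one
active particle from `x` to the corresponding nearest neighbor. -/
def applyInstr {d : ℕ} (η : Config d) (x : Site d) : Instr d → Config d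
  | Instr.sleep => if η x = some 1 then Function.update η x none else η
  | Instr.jump j s =>
      addParticle
        (Function.update η x (match η x with
          | some (k + 1) => some k
          | o => o))
        (nbr x j s)

/-- Perform the topplings of the finite sequence `α` (a list of sites), in order, using for
each site the first unused instruction of its instruction sequence `τ`; `cnt x` records how
many instructions at `x` have already been used.  Returns the resulting configuration and
updated usage counts. -/
def toppleSeq {d : ℕ} (τ : Site d → ℕ → Instr d) :
    List (Site d) → Config d → (Site d → ℕ) → Config d × (Site d → ℕ)
  | [], η, cnt => (η, cnt)
  | x :: α, η, cnt =>
      toppleSeq τ α (applyInstr η x (τ x (cnt x))) (Function.update cnt x (cnt x + 1))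

/-- The toppling sequence `α` is legal for `(η, cnt)`: each successively toppled site is
unstable at the moment of its toppling. -/
def LegalSeq {d : ℕ} (τ : Site d → ℕ → Instr d) :
    List (Site d) → Config d → (Site d → ℕ) → Prop
  | [], _, _ => True
  | x :: α, η, cnt =>
      Unstable η x ∧
        LegalSeq τ α (applyInstr η x (τ x (cnt x))) (Function.update cnt x (cnt x + 1))

/-- `α` stabilizes `η` in `V`: after performing the topplings of `α` (starting from fresh
instruction counters), every site of `V` is stable. -/
def StabilizesIn {d : ℕ} (τ : Site d → ℕ → Instr d) (α : List (Site d)) (η : Config d)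
    (V : Finset (Site d)) : Prop :=
  ∀ x ∈ V, ¬ Unstable (toppleSeq τ α η (fun _ => 0)).1 x

/-- `m_α(x)`: the number of occurrences of the site `x` in the toppling sequence `α`. -/
def mCount {d : ℕ} (α : List (Site d)) (x : Site d) : ℕ := α.count x


/-! Least action principle: if `α` and `β` are legal for `η` and every site of `α` is stable
after `β`, then `m_α ≤ m_β`. The first site `x` of `α` is unstable in `η`, and topplings at
other sites never make it stable, so `β` must topple `x`. Topplings at two distinct unstable
sites commute, since an instruction acts site by site and an arriving particle commutes with
any instruction at an active site; hence the first occurrence of `x` in `β` can be moved to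
the front, and induction on `α` applies to the remaining sequences. -/

def arrive : Option ℕ → Option ℕ
  | none => some 2
  | some m => some (m + 1)

def depart : Option ℕ → Option ℕ
  | some (k + 1) => some k
  | o => o

def fallAsleep (v : Option ℕ) : Option ℕ := if v = some 1 then none else v

section Local

variable {d : ℕ}

def instrEffect (x : Site d) : Instr d → Site d → Option ℕ → Option ℕ
  | .sleep, z => if z = x then fallAsleep else id
  | .jump j s, z => if z = x then depart else if z = nbr x j s then arrive else id

lemma nbr_ne (x : Site d) (j : Fin d) (s : Bool) : nbr x j s ≠ x := by
  intro h
  have := congrFun h j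
  cases s <;> simp [nbr] at this

lemma applyInstr_apply (η : Config d) (x : Site d) (i : Instr d) (z : Site d) :
    applyInstr η x i z = instrEffect x i z (η z) := by
  cases i with
  | sleep =>
    by_cases hzx : z = x
    · subst hzx
      by_cases h : η z = some 1 <;> simp [applyInstr, instrEffect, fallAsleep, h]
    · simp only [applyInstr, instrEffect, hzx, if_false, id]
      split_ifs <;> simp [hzx]
  | jump j s =>
    have hne := nbr_ne x j s
    by_cases hzx : z = x
    · subst hzx
      simp [applyInstr, instrEffect, addParticle, hne.symm, depart]
    · by_cases hzn : z = nbr x j s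
      · subst hzn
        cases h : η (nbr x j s) <;> simp [applyInstr, instrEffect, addParticle, hne, h, arrive]
      · simp [applyInstr, instrEffect, addParticle, hzx, hzn]

lemma instrEffect_of_ne {x z : Site d} (h : z ≠ x) (i : Instr d) :
    instrEffect x i z = id ∨ instrEffect x i z = arrive := by
  cases i with
  | sleep => simp [instrEffect, h]
  | jump j s =>
    by_cases hzn : z = nbr x j s
    · simp [instrEffect, hzn, nbr_ne]
    · simp [instrEffect, h, hzn]

lemma instrEffect_self_arrive (x : Site d) (i : Instr d) (k : ℕ) :
    instrEffect x i x (arrive (some (k + 1))) = arrive (instrEffect x i x (some (k + 1))) := by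
  cases i <;> cases k <;> simp [instrEffect, arrive, depart, fallAsleep]

lemma Unstable.applyInstr_of_ne {η : Config d} {x y : Site d} (hx : Unstable η x) (hxy : x ≠ y)
    (i : Instr d) : Unstable (applyInstr η y i) x := by
  obtain ⟨k, hk⟩ := hx
  rw [Unstable, applyInstr_apply, hk]
  rcases instrEffect_of_ne hxy i with h | h <;> rw [h]
  exacts [⟨k, rfl⟩, ⟨k + 1, rfl⟩]

lemma applyInstr_comm {η : Config d} {x y : Site d} (hxy : x ≠ y) (hx : Unstable η x)
    (hy : Unstable η y) (i j : Instr d) :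
    applyInstr (applyInstr η x i) y j = applyInstr (applyInstr η y j) x i := by
  funext z
  simp only [applyInstr_apply]
  by_cases hzx : z = x
  · subst hzx
    obtain ⟨k, hk⟩ := hx
    rw [hk]
    rcases instrEffect_of_ne hxy j with h | h <;> rw [h]
    exacts [rfl, (instrEffect_self_arrive z i k).symm]
  by_cases hzy : z = y
  · subst hzy
    obtain ⟨k, hk⟩ := hy
    rw [hk]
    rcases instrEffect_of_ne (Ne.symm hxy) i with h | h <;> rw [h]
    exacts [rfl, instrEffect_self_arrive z j k]
  rcases instrEffect_of_ne hzx i with h | h <;> rcases instrEffect_of_ne hzy j with h' | h' <;>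
    rw [h, h'] <;> rfl

end Local

section Sequences

variable {d : ℕ} (τ : Site d → ℕ → Instr d)

def toppleStep (s : Config d × (Site d → ℕ)) (x : Site d) : Config d × (Site d → ℕ) :=
  (applyInstr s.1 x (τ x (s.2 x)), Function.update s.2 x (s.2 x + 1))

lemma toppleStep_comm {η : Config d} {cnt : Site d → ℕ} {x y : Site d} (hxy : x ≠ y)
    (hx : Unstable η x) (hy : Unstable η y) :
    toppleStep τ (toppleStep τ (η, cnt) x) y = toppleStep τ (toppleStep τ (η, cnt) y) x := by
  simp only [toppleStep, Function.update_of_ne hxy, Function.update_of_ne hxy.symm,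
    applyInstr_comm hxy hx hy, Function.update_comm hxy]

lemma toppleSeq_swap {η : Config d} {cnt : Site d → ℕ} {x y : Site d} (hxy : x ≠ y)
    (hx : Unstable η x) (hy : Unstable η y) (γ : List (Site d)) :
    toppleSeq τ (x :: y :: γ) η cnt = toppleSeq τ (y :: x :: γ) η cnt :=
  congrArg (fun s : Config d × (Site d → ℕ) => toppleSeq τ γ s.1 s.2)
    (toppleStep_comm τ hxy hx hy)

lemma LegalSeq.swap {η : Config d} {cnt : Site d → ℕ} {x y : Site d} {γ : List (Site d)}
    (h : LegalSeq τ (y :: x :: γ) η cnt) (hxy : x ≠ y) (hx : Unstable η x) :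
    LegalSeq τ (x :: y :: γ) η cnt := by
  obtain ⟨hy, -, hγ⟩ := h
  have hcomm := toppleStep_comm τ (cnt := cnt) hxy hx hy
  exact ⟨hx, hy.applyInstr_of_ne hxy.symm _,
    (congrArg (fun s : Config d × (Site d → ℕ) => LegalSeq τ γ s.1 s.2) hcomm).mpr hγ⟩

lemma Unstable.toppleSeq_of_notMem {x : Site d} {β : List (Site d)} {η : Config d}
    (hx : Unstable η x) (hβ : x ∉ β) (cnt : Site d → ℕ) :
    Unstable (toppleSeq τ β η cnt).1 x := by
  induction β generalizing η cnt with
  | nil => exact hx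
  | cons y β ih =>
    rw [List.mem_cons, not_or] at hβ
    exact ih (hx.applyInstr_of_ne hβ.1 _) hβ.2 _

lemma LegalSeq.move_to_front {x : Site d} {β₁ β₂ : List (Site d)} {η : Config d}
    {cnt : Site d → ℕ} (h : LegalSeq τ (β₁ ++ x :: β₂) η cnt) (hx : Unstable η x)
    (hβ₁ : x ∉ β₁) :
    LegalSeq τ (x :: (β₁ ++ β₂)) η cnt ∧
      toppleSeq τ (x :: (β₁ ++ β₂)) η cnt = toppleSeq τ (β₁ ++ x :: β₂) η cnt := by
  induction β₁ generalizing η cnt with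
  | nil => exact ⟨h, rfl⟩
  | cons y β₁ ih =>
    rw [List.mem_cons, not_or] at hβ₁
    obtain ⟨hy, hrest⟩ := h
    obtain ⟨hlegal, htopple⟩ := ih hrest (hx.applyInstr_of_ne hβ₁.1 _) hβ₁.2
    exact ⟨LegalSeq.swap τ ⟨hy, hlegal⟩ hβ₁.1 hx,
      (toppleSeq_swap τ hβ₁.1 hx hy _).trans htopple⟩

lemma count_le_count_of_legalSeq {α β : List (Site d)} {η : Config d} {cnt : Site d → ℕ}
    (hα : LegalSeq τ α η cnt) (hβ : LegalSeq τ β η cnt)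
    (hstab : ∀ x ∈ α, ¬ Unstable (toppleSeq τ β η cnt).1 x) (z : Site d) :
    α.count z ≤ β.count z := by
  induction α generalizing β η cnt with
  | nil => simp
  | cons x α ih =>
    obtain ⟨hx, hα⟩ := hα
    have hxβ : x ∈ β := by
      by_contra hxβ
      exact hstab x List.mem_cons_self (hx.toppleSeq_of_notMem τ hxβ cnt)
    obtain ⟨β₁, β₂, rfl, hβ₁⟩ := List.eq_append_cons_of_mem hxβ
    obtain ⟨⟨-, hlegal⟩, htopple⟩ := hβ.move_to_front τ hx hβ₁
    have hcount := ih hα hlegal (fun w hw => htopple ▸ hstab w (List.mem_cons_of_mem x hw))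
    rw [List.perm_middle.count_eq, List.count_cons, List.count_cons]
    omega

end Sequences

/-- **Abelian property.**  Fix a configuration `η` and an instruction sequence at each site.
If `α` and `β` are two legal toppling sequences for `η`, both contained in a finite set
`V ⊆ ℤ^d` and both stabilizing `η` in `V`, then `m_α(x) = m_β(x)` for every `x ∈ ℤ^d`. -/
theorem abelian_property {d : ℕ} (τ : Site d → ℕ → Instr d) (η : Config d)
    (V : Finset (Site d)) (α β : List (Site d))
    (hαV : ∀ x ∈ α, x ∈ V) (hβV : ∀ x ∈ β, x ∈ V)
    (hα : LegalSeq τ α η (fun _ => 0)) (hβ : LegalSeq τ β η (fun _ => 0))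
    (hαstab : StabilizesIn τ α η V) (hβstab : StabilizesIn τ β η V) :
    ∀ x : Site d, mCount α x = mCount β x := fun x =>
  le_antisymm
    (count_le_count_of_legalSeq τ hα hβ (fun w hw => hβstab w (hαV w hw)) x)
    (count_le_count_of_legalSeq τ hβ hα (fun w hw => hαstab w (hβV w hw)) x)
end
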